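/- arXiv:1707.01634 — 9 statements merged into one kernel-verified Lean document; each statement's English description precedes it below -/
import Mathlib

section
/- Let G be a connected graph of order n ≥ k², where k ≥ 3. If the minimum degree δ(G) ≥ (n−k+1)/k, then G has at most k−2 cut edges (bridges). -/
open SimpleGraph

/-- Degree of a vertex. -/
noncomputable def vdeg {V : Type*} (G : SimpleGraph V) (v : V) : ℕ := (G.neighborSet v).ncard

/-- An edge-coloring `c` makes `G` conflict-free connected if any two distinct vertices are
joined by a path on which some color appears on exactly one edge. -/
def IsCFConnected {V : Type*} (G : SimpleGraph V) (c : Sym2 V → ℕ) : Prop :=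
  ∀ u v : V, u ≠ v → ∃ p : G.Walk u v, p.IsPath ∧
    ∃ col : ℕ, (p.edges.filter (fun e => c e = col)).length = 1

/-- The conflict-free connection number of `G`. -/
noncomputable def cfcNum {V : Type*} (G : SimpleGraph V) : ℕ :=
  sInf {k | ∃ c : Sym2 V → ℕ, (∀ e ∈ G.edgeSet, c e < k) ∧ IsCFConnected G c}

/-- The subgraph `C(G)` spanned by the cut edges (bridges) of `G`. -/
def bridgeGraph {V : Type*} (G : SimpleGraph V) : SimpleGraph V :=
  SimpleGraph.fromEdgeSet {e | G.IsBridge e}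

/-- A linear forest: an acyclic graph with maximum degree at most two. -/
def IsLinearForest {V : Type*} (H : SimpleGraph V) : Prop :=
  H.IsAcyclic ∧ ∀ v, (H.neighborSet v).ncard ≤ 2

/-!
Let `H` be `G` with its `m` bridges deleted. Deleting bridges one at a time splits a component
each time, so `H` has at least `m + 1` components. Since `n ≥ k²`, every degree is at least `k`.
A component of `H` containing a vertex on no bridge contains that vertex's whole neighbourhood,
so it has more than `n / k` vertices, and there are fewer than `k` such large components. In
every other component all vertices lie on bridges, and the degree bound forces at least `k`
bridge ends into it; when `m > 0` each component receives at least one bridge end. Counting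
bridge ends gives `2m ≥ t + k s` with `t < k` large components and `t + s ≥ m + 1`, which forces
`m ≤ k - 2`.
-/

open Finset

theorem card_filter_sum_lt_mul_lt {ι : Type*} (s : Finset ι) (c : ι → ℕ) {k : ℕ} (hk : 0 < k) :
    #{i ∈ s | ∑ j ∈ s, c j < k * c i} < k := by
  by_contra! hF
  have hlow : #{i ∈ s | ∑ j ∈ s, c j < k * c i} • (∑ j ∈ s, c j + 1) ≤
      ∑ i ∈ s with ∑ j ∈ s, c j < k * c i, k * c i :=
    card_nsmul_le_sum _ _ _ fun i hi => (mem_filter.mp hi).2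
  have hup : ∑ i ∈ s with ∑ j ∈ s, c j < k * c i, k * c i ≤ k * ∑ j ∈ s, c j := by
    rw [mul_sum]
    exact sum_le_sum_of_subset (filter_subset _ _)
  rw [smul_eq_mul] at hlow
  nlinarith [Nat.mul_le_mul_right (∑ j ∈ s, c j + 1) hF]

/-- Applied with `c` the sizes of the bridgeless components and `d` the numbers of bridge ends
they contain. -/
theorem add_two_le_of_sum_eq_two_mul {ι : Type*} [Fintype ι] (c d : ι → ℕ) {n m k : ℕ}
    (hk : 2 ≤ k) (hc : ∑ i, c i = n) (hd : ∑ i, d i = 2 * m) (hcard : m + 1 ≤ Fintype.card ι)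
    (hd_pos : ∀ i, 0 < d i) (hlarge : ∀ i, n < k * c i ∨ k ≤ d i) : m + 2 ≤ k := by
  subst hc
  set t := #{i | ∑ j, c j < k * c i}
  set s := #{i | ¬∑ j, c j < k * c i}
  have ht : t < k := card_filter_sum_lt_mul_lt _ c (by omega)
  have hts : t + s = Fintype.card ι := card_filter_add_card_filter_not _
  have hsum : t * 1 + s * k ≤ 2 * m := by
    rw [← hd, ← sum_filter_add_sum_filter_not univ fun i => ∑ j, c j < k * c i]
    gcongr
    · exact smul_eq_mul t 1 ▸ card_nsmul_le_sum _ _ _ fun i _ => hd_pos i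
    · exact smul_eq_mul s k ▸ card_nsmul_le_sum _ _ _ fun i hi =>
        (hlarge i).resolve_left (mem_filter.mp hi).2
  nlinarith

namespace SimpleGraph

variable {V : Type*}

theorem vdeg_eq_degree (G : SimpleGraph V) (v : V) [Fintype (G.neighborSet v)] :
    vdeg G v = G.degree v := by
  rw [vdeg, Set.ncard_eq_toFinset_card', Set.toFinset_card, card_neighborSet_eq_degree]

theorem edgeSet_bridgeGraph (G : SimpleGraph V) :
    (bridgeGraph G).edgeSet = {e | G.IsBridge e} := by
  rw [bridgeGraph, edgeSet_fromEdgeSet, sdiff_eq_left, Set.disjoint_left]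
  rintro ⟨u, v⟩ hb hdiag
  obtain rfl : u = v := Sym2.mk_isDiag_iff.mp hdiag
  exact hb (Reachable.refl u)

theorem IsBridge.card_connectedComponent_lt [Finite V] {G : SimpleGraph V} {u v : V}
    (hb : G.IsBridge s(u, v)) (huv : G.Reachable u v) :
    Nat.card G.ConnectedComponent < Nat.card (G.deleteEdges {s(u, v)}).ConnectedComponent := by
  have := Fintype.ofFinite G.ConnectedComponent
  have := Fintype.ofFinite (G.deleteEdges {s(u, v)}).ConnectedComponent
  rw [Nat.card_eq_fintype_card, Nat.card_eq_fintype_card]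
  refine Fintype.card_lt_of_surjective_not_injective _
    (ConnectedComponent.surjective_map_ofLE (deleteEdges_le _)) fun hinj => hb ?_
  exact ConnectedComponent.exact (hinj (ConnectedComponent.sound huv))

theorem ncard_add_card_connectedComponent_le_deleteEdges [Finite V] {G : SimpleGraph V}
    (S : Set (Sym2 V)) (hS : ∀ e ∈ S, e ∈ G.edgeSet ∧ G.IsBridge e) :
    S.ncard + Nat.card G.ConnectedComponent ≤ Nat.card (G.deleteEdges S).ConnectedComponent := by
  induction S, S.toFinite using Set.Finite.induction_on with
  | empty => simp
  | @insert e S heS hSfin ih =>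
    obtain ⟨he, hb⟩ := hS e (Set.mem_insert _ _)
    specialize ih fun e' he' => hS e' (Set.mem_insert_of_mem _ he')
    induction e using Sym2.ind with
    | _ u v =>
      have hadj : (G.deleteEdges S).Adj u v := (deleteEdges_adj).mpr ⟨he, heS⟩
      have hlt := (hb.anti (deleteEdges_le S)).card_connectedComponent_lt hadj.reachable
      rw [Set.ncard_insert_of_notMem heS, Set.insert_eq, Set.union_comm,
        ← deleteEdges_deleteEdges]
      omega

theorem Connected.ncard_add_one_le_card_connectedComponent_deleteEdges [Finite V]
    {G : SimpleGraph V} (hG : G.Connected) (S : Set (Sym2 V)) (hS : ∀ e ∈ S, G.IsBridge e) :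
    S.ncard + 1 ≤ Nat.card (G.deleteEdges S).ConnectedComponent := by
  have hone : Nat.card G.ConnectedComponent = 1 :=
    Nat.card_eq_one_iff_unique.mpr
      ⟨hG.preconnected.subsingleton_connectedComponent, hG.nonempty.map G.connectedComponentMk⟩
  refine hone ▸ ncard_add_card_connectedComponent_le_deleteEdges S fun e he => ⟨?_, hS e he⟩
  induction e using Sym2.ind with
  | _ u v => exact (hS _ he).reachable_iff_adj.mp (hG.preconnected u v)

section Components

variable [Fintype V] {G H K : SimpleGraph V} [DecidableRel K.Adj]
  [DecidableEq H.ConnectedComponent]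

theorem degree_add_one_le_card_add_degree [DecidableEq V] [DecidableRel G.Adj]
    (hle : G ≤ K ⊔ H) {C : H.ConnectedComponent} {v : V} (hv : H.connectedComponentMk v = C) :
    G.degree v + 1 ≤ #{w | H.connectedComponentMk w = C} + K.degree v := by
  have hsub : G.neighborFinset v ⊆
      ({w | H.connectedComponentMk w = C} : Finset V).erase v ∪ K.neighborFinset v := by
    intro w hw
    rw [mem_neighborFinset] at hw
    rcases hle hw with hK | hH
    · exact mem_union_right _ ((mem_neighborFinset _ _ _).mpr hK)
    · refine mem_union_left _ (mem_erase.mpr ⟨hw.ne', ?_⟩)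
      simpa [← hv] using (ConnectedComponent.connectedComponentMk_eq_of_adj hH).symm
  calc G.degree v + 1 ≤ #(({w | H.connectedComponentMk w = C} : Finset V).erase v ∪
        K.neighborFinset v) + 1 := by grw [← hsub, card_neighborFinset_eq_degree]
    _ ≤ #(({w | H.connectedComponentMk w = C} : Finset V).erase v) + K.degree v + 1 := by
        grw [card_union_le, card_neighborFinset_eq_degree]
    _ = #{w | H.connectedComponentMk w = C} + K.degree v := by
        rw [add_right_comm, card_erase_add_one (by simpa using hv)]

theorem exists_degree_add_one_le_card_or_le_sum_degree [DecidableEq V] [DecidableRel G.Adj]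
    (hle : G ≤ K ⊔ H) {k : ℕ} (hk : ∀ v, k ≤ G.degree v) (C : H.ConnectedComponent) :
    (∃ v, H.connectedComponentMk v = C ∧ G.degree v + 1 ≤ #{w | H.connectedComponentMk w = C}) ∨
      k ≤ ∑ v with H.connectedComponentMk v = C, K.degree v := by
  by_cases h : ∃ v, H.connectedComponentMk v = C ∧ K.degree v = 0
  · obtain ⟨v, hv, hv0⟩ := h
    exact .inl ⟨v, hv, by simpa [hv0] using degree_add_one_le_card_add_degree hle hv⟩
  push Not at h
  right
  set c := #{w | H.connectedComponentMk w = C}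
  have hc : 1 ≤ c := by
    induction C using ConnectedComponent.ind with
    | h v => exact card_pos.mpr ⟨v, mem_filter.mpr ⟨mem_univ _, rfl⟩⟩
  have hb : ∀ w ∈ ({w | H.connectedComponentMk w = C} : Finset V),
      max 1 (k + 1 - c) ≤ K.degree w := by
    intro w hw
    have hw : H.connectedComponentMk w = C := by simpa using hw
    have := degree_add_one_le_card_add_degree hle hw
    have := hk w
    have := h w hw
    omega
  have hb₁ : 1 ≤ max 1 (k + 1 - c) := le_max_left _ _
  have hb₂ : k + 1 ≤ c + max 1 (k + 1 - c) := by omega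
  calc k ≤ c * max 1 (k + 1 - c) := by nlinarith
    _ ≤ _ := smul_eq_mul c _ ▸ card_nsmul_le_sum _ _ _ hb

theorem sum_degree_pos_of_connected (hG : G.Connected) (hle : G ≤ K ⊔ H)
    {C : H.ConnectedComponent} {y : V} (hy : H.connectedComponentMk y ≠ C) :
    0 < ∑ v with H.connectedComponentMk v = C, K.degree v := by
  induction C using ConnectedComponent.ind with | h x => ?_
  obtain ⟨d, -, hd₁, hd₂⟩ := (hG.preconnected x y).some.exists_boundary_dart
    {w | H.connectedComponentMk w = H.connectedComponentMk x} rfl hy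
  have hK : K.Adj d.fst d.snd := (hle d.adj).resolve_right fun hH =>
    hd₂ ((ConnectedComponent.connectedComponentMk_eq_of_adj hH).symm.trans hd₁)
  exact sum_pos' (fun _ _ => Nat.zero_le _)
    ⟨d.fst, mem_filter.mpr ⟨mem_univ _, hd₁⟩, (K.degree_pos_iff_exists_adj _).mpr ⟨_, hK⟩⟩

theorem sum_card_filter_connectedComponentMk_eq [Fintype H.ConnectedComponent] :
    ∑ C : H.ConnectedComponent, #{v | H.connectedComponentMk v = C} = Fintype.card V :=
  (card_eq_sum_card_fiberwise fun v _ => mem_univ (H.connectedComponentMk v)).symm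

theorem sum_sum_degree_filter_connectedComponentMk_eq [Fintype H.ConnectedComponent] :
    ∑ C : H.ConnectedComponent, ∑ v with H.connectedComponentMk v = C, K.degree v =
      2 * #K.edgeFinset := by
  rw [sum_fiberwise, sum_degrees_eq_twice_card_edges]

end Components

end SimpleGraph

theorem stmt_0 {V : Type*} [Fintype V] (G : SimpleGraph V) (k : ℕ) (hk : 3 ≤ k)
    (hn : k ^ 2 ≤ Fintype.card V) (hG : G.Connected)
    (hδ : ∀ v, ((Fintype.card V : ℚ) - k + 1) / k ≤ (vdeg G v : ℚ)) :
    {e : Sym2 V | G.IsBridge e}.ncard ≤ k - 2 := by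
  classical
  set B := {e : Sym2 V | G.IsBridge e}
  set H := G.deleteEdges B
  have hle : G ≤ bridgeGraph G ⊔ H := (deleteEdges_le_iff B H).mp le_rfl
  have hlarge : ∀ v, Fintype.card V < k * (G.degree v + 1) := by
    intro v
    have := hδ v
    rw [vdeg_eq_degree, div_le_iff₀ (by positivity)] at this
    exact_mod_cast (by linarith : ((Fintype.card V : ℕ) : ℚ) < k * (G.degree v + 1))
  have hmin : ∀ v, k ≤ G.degree v := fun v => by nlinarith [hlarge v]
  have hcomp : B.ncard + 1 ≤ Nat.card H.ConnectedComponent :=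
    hG.ncard_add_one_le_card_connectedComponent_deleteEdges B fun _ => id
  rcases Nat.eq_zero_or_pos B.ncard with h0 | hpos
  · omega
  have : Nontrivial H.ConnectedComponent := Finite.one_lt_card_iff_nontrivial.mp (by omega)
  have hm : #(bridgeGraph G).edgeFinset = B.ncard := by
    rw [← Set.ncard_coe_finset, coe_edgeFinset, edgeSet_bridgeGraph]
  refine Nat.le_sub_of_add_le (add_two_le_of_sum_eq_two_mul
    (fun C => #{v | H.connectedComponentMk v = C}) _ (by omega)
    sum_card_filter_connectedComponentMk_eq
    (hm ▸ sum_sum_degree_filter_connectedComponentMk_eq (H := H)) ?_ ?_ ?_)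
  · rwa [← Nat.card_eq_fintype_card]
  · intro C
    obtain ⟨C', hC'⟩ := exists_ne C
    induction C' using ConnectedComponent.ind with
    | h y => exact sum_degree_pos_of_connected hG hle hC'
  · intro C
    exact (exists_degree_add_one_le_card_or_le_sum_degree hle hmin C).imp_left
      fun ⟨v, _, hvC⟩ => (hlarge v).trans_le (Nat.mul_le_mul_left k hvC)
end

section
/- For every k ≥ 3 and t ≥ 3 there exists a connected graph H on n = k·t vertices with minimum degree δ(H) = (n−k)/k which has exactly k−1 cut edges. (Construction: take a path on k vertices and attach a complete graph K_t to each vertex of the path, identifying one vertex of each K_t with a path vertex.) -/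
open SimpleGraph

/-! Glue a copy of `K_t` at each vertex of the path `P_k`. The vertices of a clique other than
its path vertex have degree exactly `t - 1`, and no vertex has less. Since `t ≥ 3`, every clique
edge lies on a triangle and so is not a bridge, while deleting a path edge disconnects the graph
exactly as it disconnects `P_k`. Hence the bridges are the edges of the tree `P_k`, of which
there are `k - 1`. -/

lemma ncard_image_mk_compl {ι : Type*} {t : ℕ} (i : ι) (a : Fin t) :
    (Prod.mk i '' {a}ᶜ).ncard = t - 1 := by
  rw [Set.ncard_image_of_injective _ (Prod.mk_right_injective i), Set.ncard_compl,
    Set.ncard_singleton, Nat.card_eq_fintype_card, Fintype.card_fin]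

namespace SimpleGraph

variable {V W : Type*}

lemma Reachable.of_forall_adj {G : SimpleGraph V} {G' : SimpleGraph W} (f : V → W)
    (hf : ∀ a b, G.Adj a b → G'.Reachable (f a) (f b)) {u v : V} (h : G.Reachable u v) :
    G'.Reachable (f u) (f v) := by
  rw [reachable_iff_reflTransGen] at h ⊢
  exact h.lift' f fun a b hab => reachable_iff_reflTransGen _ _ |>.1 (hf a b hab)

lemma not_isBridge_of_adj_of_adj {G : SimpleGraph V} {u v w : V} (hu : G.Adj u w)
    (hv : G.Adj w v) : ¬ G.IsBridge s(u, v) := by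
  rw [isBridge_iff, not_not]
  have huw : (G.deleteEdges {s(u, v)}).Adj u w :=
    (deleteEdges_adj ..).2 ⟨hu, fun h => hv.ne (Sym2.congr_right.1 h)⟩
  have hwv : (G.deleteEdges {s(u, v)}).Adj w v :=
    (deleteEdges_adj ..).2 ⟨hv, fun h => hu.ne (Sym2.congr_left.1 h).symm⟩
  exact huw.reachable.trans hwv.reachable

lemma setOf_isBridge_eq_edgeSet {G : SimpleGraph V} (hG : G.IsTree) :
    {e | G.IsBridge e} = G.edgeSet := by
  ext e
  induction e with
  | h u v =>
    exact ⟨fun h => (h.reachable_iff_adj).1 (hG.connected.preconnected u v),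
      fun h => isAcyclic_iff_forall_isBridge.1 hG.isAcyclic h⟩

lemma pathGraph_edgeSet (n : ℕ) :
    (pathGraph (n + 1)).edgeSet = Set.range fun i : Fin n => s(i.castSucc, i.succ) := by
  ext e
  induction e with
  | h u v =>
    simp only [mem_edgeSet, pathGraph_adj, Set.mem_range, Sym2.eq_iff, Fin.ext_iff]
    constructor
    · rintro (h | h)
      exacts [⟨⟨u, by omega⟩, by simp; omega⟩, ⟨⟨v, by omega⟩, by simp; omega⟩]
    · rintro ⟨i, h | h⟩ <;> simp only [Fin.val_castSucc, Fin.val_succ] at h <;> omega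

lemma ncard_edgeSet_pathGraph (n : ℕ) : (pathGraph (n + 1)).edgeSet.ncard = n := by
  rw [pathGraph_edgeSet, Set.ncard_range_of_injective, Nat.card_eq_fintype_card, Fintype.card_fin]
  intro i j h
  rcases Sym2.eq_iff.1 h with ⟨h, -⟩ | ⟨h, h'⟩
  · exact Fin.castSucc_inj.1 h
  · rw [Fin.ext_iff] at h h'
    simp only [Fin.val_castSucc, Fin.val_succ] at h h'
    omega

lemma isTree_pathGraph (n : ℕ) : (pathGraph (n + 1)).IsTree := by
  refine isTree_iff_connected_and_card.2 ⟨pathGraph_connected n, ?_⟩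
  rw [Nat.card_coe_set_eq, ncard_edgeSet_pathGraph, Nat.card_eq_fintype_card,
    Fintype.card_fin]

section AttachCliques

variable {ι : Type*}

/-- `P` with a copy of `K_t` glued at each vertex: `(i, 0)` is the vertex `i` of `P`, and the
vertices `(i, a)` form the clique glued at `i`. -/
def attachCliques (P : SimpleGraph ι) (t : ℕ) [NeZero t] : SimpleGraph (ι × Fin t) where
  Adj x y := x ≠ y ∧ (x.1 = y.1 ∨ x.2 = 0 ∧ y.2 = 0 ∧ P.Adj x.1 y.1)
  symm.symm _ _ h := ⟨h.1.symm, h.2.imp Eq.symm fun h => ⟨h.2.1, h.1, h.2.2.symm⟩⟩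
  loopless.irrefl _ h := h.1 rfl

variable {P : SimpleGraph ι} {t : ℕ} [NeZero t]

@[simp]
lemma attachCliques_adj {x y : ι × Fin t} : (attachCliques P t).Adj x y ↔
    x ≠ y ∧ (x.1 = y.1 ∨ x.2 = 0 ∧ y.2 = 0 ∧ P.Adj x.1 y.1) :=
  .rfl

lemma attachCliques_adj_mk_mk_left {i : ι} {a b : Fin t} (hab : a ≠ b) :
    (attachCliques P t).Adj (i, a) (i, b) :=
  attachCliques_adj.2 ⟨by simpa using hab, Or.inl rfl⟩

lemma attachCliques_adj_mk_zero {i j : ι} :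
    (attachCliques P t).Adj (i, 0) (j, 0) ↔ P.Adj i j :=
  ⟨fun h => ((attachCliques_adj.1 h).2.resolve_left fun hij => h.ne (Prod.ext hij rfl)).2.2,
    fun h => attachCliques_adj.2 ⟨by simp [h.ne], Or.inr ⟨rfl, rfl, h⟩⟩⟩

lemma image_mk_compl_subset_neighborSet (v : ι × Fin t) :
    Prod.mk v.1 '' {v.2}ᶜ ⊆ (attachCliques P t).neighborSet v := by
  rintro _ ⟨b, hb, rfl⟩
  exact attachCliques_adj_mk_mk_left (Ne.symm hb)

lemma neighborSet_attachCliques_of_ne_zero {v : ι × Fin t} (hv : v.2 ≠ 0) :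
    (attachCliques P t).neighborSet v = Prod.mk v.1 '' {v.2}ᶜ := by
  refine subset_antisymm ?_ (image_mk_compl_subset_neighborSet v)
  rintro ⟨j, b⟩ h
  obtain ⟨hne, hj | ⟨h0, -⟩⟩ := attachCliques_adj.1 h
  · refine ⟨b, fun hb => hne ?_, by rw [hj]⟩
    simp_all [Prod.ext_iff]
  · exact absurd h0 hv

lemma le_vdeg_attachCliques [Finite ι] (v : ι × Fin t) : t - 1 ≤ vdeg (attachCliques P t) v :=
  ncard_image_mk_compl v.1 v.2 ▸ Set.ncard_le_ncard (image_mk_compl_subset_neighborSet v)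

lemma vdeg_attachCliques_of_ne_zero {v : ι × Fin t} (hv : v.2 ≠ 0) :
    vdeg (attachCliques P t) v = t - 1 := by
  rw [vdeg, neighborSet_attachCliques_of_ne_zero hv, ncard_image_mk_compl]

lemma attachCliques_preconnected (hP : P.Preconnected) : (attachCliques P t).Preconnected := by
  have to_root (v : ι × Fin t) : (attachCliques P t).Reachable v (v.1, 0) := by
    by_cases hv : v.2 = 0
    · rw [← hv]
    · exact (attachCliques_adj_mk_mk_left hv).reachable
  intro u v
  refine (to_root u).trans (Reachable.trans ?_ (to_root v).symm)
  exact (hP u.1 v.1).of_forall_adj (·, 0) fun i j hij => (attachCliques_adj_mk_zero.2 hij).reachable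

lemma attachCliques_connected (hP : P.Connected) : (attachCliques P t).Connected :=
  have := hP.nonempty
  (connected_iff _).2 ⟨attachCliques_preconnected hP.preconnected, inferInstance⟩

lemma isBridge_attachCliques_mk_zero_iff {i j : ι} :
    (attachCliques P t).IsBridge s((i, 0), (j, 0)) ↔ P.IsBridge s(i, j) := by
  rw [isBridge_iff, isBridge_iff, not_iff_not]
  constructor
  · intro h
    refine h.of_forall_adj Prod.fst fun x y hxy => ?_
    obtain ⟨hxy, hxy_ne⟩ := deleteEdges_adj.1 hxy
    obtain ⟨-, h | ⟨hx, hy, hP⟩⟩ := attachCliques_adj.1 hxy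
    · rw [h]
    · refine (deleteEdges_adj.2 ⟨hP, fun he => hxy_ne ?_⟩).reachable
      obtain ⟨x, a⟩ := x
      obtain ⟨y, b⟩ := y
      obtain rfl : a = 0 := hx
      obtain rfl : b = 0 := hy
      simpa using congrArg (Sym2.map (·, (0 : Fin t))) he
  · intro h
    refine h.of_forall_adj (·, 0) fun x y hxy => ?_
    obtain ⟨hxy, hxy_ne⟩ := deleteEdges_adj.1 hxy
    refine (deleteEdges_adj.2 ⟨attachCliques_adj_mk_zero.2 hxy, fun he => hxy_ne ?_⟩).reachable
    simpa [Sym2.map.injective (Prod.mk_left_injective (0 : Fin t)) |>.eq_iff] using he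

lemma setOf_isBridge_attachCliques (ht : 3 ≤ t) (hP : P.Preconnected) :
    {e | (attachCliques P t).IsBridge e} = Sym2.map (·, 0) '' {e | P.IsBridge e} := by
  ext e
  constructor
  · intro hb
    induction e with
    | h x y =>
      obtain ⟨i, a⟩ := x
      obtain ⟨j, b⟩ := y
      have hxy := hb.reachable_iff_adj.1 (attachCliques_preconnected hP _ _)
      obtain ⟨-, hij | ⟨rfl, rfl, -⟩⟩ := attachCliques_adj.1 hxy
      · obtain rfl : i = j := hij
        obtain ⟨c, hca, hcb⟩ := Fin.exists_ne_and_ne_of_two_lt a b ht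
        exact (not_isBridge_of_adj_of_adj (attachCliques_adj_mk_mk_left hca.symm)
          (attachCliques_adj_mk_mk_left hcb) hb).elim
      · exact ⟨s(i, j), isBridge_attachCliques_mk_zero_iff.1 hb, rfl⟩
  · rintro ⟨e, he, rfl⟩
    induction e with
    | h i j => exact isBridge_attachCliques_mk_zero_iff.2 he

end AttachCliques

end SimpleGraph

theorem stmt_1 (k t : ℕ) (hk : 3 ≤ k) (ht : 3 ≤ t) :
    ∃ (V : Type) (_ : Fintype V) (H : SimpleGraph V),
      Fintype.card V = k * t ∧ H.Connected ∧
      (∀ v, t - 1 ≤ vdeg H v) ∧ (∃ v, vdeg H v = t - 1) ∧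
      {e : Sym2 V | H.IsBridge e}.ncard = k - 1 := by
  obtain ⟨n, rfl⟩ : ∃ n, k = n + 1 := ⟨k - 1, by omega⟩
  have : NeZero t := ⟨by omega⟩
  have hpath := isTree_pathGraph n
  refine ⟨Fin (n + 1) × Fin t, inferInstance, attachCliques (pathGraph (n + 1)) t, by simp,
    attachCliques_connected hpath.connected, le_vdeg_attachCliques,
    ⟨(0, ⟨1, by omega⟩), vdeg_attachCliques_of_ne_zero (by simp [Fin.ext_iff])⟩, ?_⟩
  rw [setOf_isBridge_attachCliques ht hpath.connected.preconnected,
    Set.ncard_image_of_injective _ (Sym2.map.injective (Prod.mk_left_injective 0)),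
    setOf_isBridge_eq_edgeSet hpath, ncard_edgeSet_pathGraph, Nat.add_sub_cancel]
end

section
/- For every k ≥ 5 there exists a connected graph D on n = k²+k−1 vertices such that deg(x)+deg(y) ≥ (2n−2k+1)/k for every pair of non-adjacent vertices x and y, and D has exactly k−1 cut edges. (Construction: a vertex v₀ joined by k−1 cut edges to k−1 disjoint complete graphs on k+2 vertices.) -/
/-!
Each of the `k - 1` cliques `K_{k+2}` hangs off the hub by a single edge, which is therefore a cut
edge, while every edge inside a clique lies on a triangle. The hub has degree `k - 1` and every
other vertex degree at least `k + 1`, so any two distinct vertices have degree sum at least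
`2k ≥ 2k - 1/k = (2n - 2k + 1)/k`.
-/

open SimpleGraph

/-- The hub `none` joined by one edge to the vertex `some (i, r)` of each complete graph
`{some (i, a) | a : α}`, `i : ι`. -/
def cliqueStar (ι : Type*) {α : Type*} (r : α) : SimpleGraph (Option (ι × α)) where
  Adj
    | some (i, a), some (j, b) => i = j ∧ a ≠ b
    | none, some (_, b) => b = r
    | some (_, a), none => a = r
    | none, none => False
  symm := ⟨by rintro (_ | ⟨i, a⟩) (_ | ⟨j, b⟩) h <;> simp_all [eq_comm]⟩
  loopless := ⟨by rintro (_ | ⟨i, a⟩) h <;> simp_all⟩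

section cliqueStar

variable {ι α : Type*} {r : α}

@[simp] lemma cliqueStar_adj_some_some {i j : ι} {a b : α} :
    (cliqueStar ι r).Adj (some (i, a)) (some (j, b)) ↔ i = j ∧ a ≠ b := .rfl

@[simp] lemma cliqueStar_adj_none_some {j : ι} {b : α} :
    (cliqueStar ι r).Adj none (some (j, b)) ↔ b = r := .rfl

@[simp] lemma cliqueStar_adj_some_none {i : ι} {a : α} :
    (cliqueStar ι r).Adj (some (i, a)) none ↔ a = r := .rfl

@[simp] lemma cliqueStar_not_adj_none_none : ¬(cliqueStar ι r).Adj none none := id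

lemma cliqueStar_connected : (cliqueStar ι r).Connected := by
  have reach_hub : ∀ v, (cliqueStar ι r).Reachable none v := by
    rintro (_ | ⟨i, a⟩)
    · rfl
    · refine (Adj.reachable (v := some (i, r)) (by simp)).trans ?_
      obtain rfl | har := eq_or_ne a r
      · rfl
      · exact Adj.reachable (by simp [Ne.symm har])
  exact ⟨fun u v => (reach_hub u).symm.trans (reach_hub v)⟩

lemma vdeg_cliqueStar_none : vdeg (cliqueStar ι r) none = Nat.card ι := by
  have : (cliqueStar ι r).neighborSet none = Set.range fun i => some (i, r) := by
    ext (_ | ⟨i, a⟩) <;> simp [eq_comm]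
  rw [vdeg, this, Set.ncard_range_of_injective fun i j h => by simpa using h]

lemma le_vdeg_cliqueStar_some [Finite ι] [Finite α] (i : ι) (a : α) :
    Nat.card α - 1 ≤ vdeg (cliqueStar ι r) (some (i, a)) := by
  have hsub : (fun b => some (i, b)) '' {a}ᶜ ⊆ (cliqueStar ι r).neighborSet (some (i, a)) := by
    rintro _ ⟨b, hb, rfl⟩
    simpa [eq_comm] using hb
  calc Nat.card α - 1 = ({a}ᶜ : Set α).ncard := by rw [Set.ncard_compl, Set.ncard_singleton]
    _ = ((fun b => some (i, b)) '' {a}ᶜ).ncard :=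
      (Set.ncard_image_of_injective _ fun b c h => by simpa using h).symm
    _ ≤ vdeg (cliqueStar ι r) (some (i, a)) := Set.ncard_le_ncard hsub

lemma min_add_le_vdeg_add_vdeg_cliqueStar [Finite ι] [Finite α] {x y : Option (ι × α)}
    (hxy : x ≠ y) :
    min (Nat.card ι) (Nat.card α - 1) + (Nat.card α - 1) ≤
      vdeg (cliqueStar ι r) x + vdeg (cliqueStar ι r) y := by
  have hsome := le_vdeg_cliqueStar_some (ι := ι) (r := r)
  have hnone := vdeg_cliqueStar_none (ι := ι) (r := r)
  match x, y with
  | none, none => exact absurd rfl hxy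
  | none, some (i, b) => have := hsome i b; omega
  | some (i, a), none => have := hsome i a; omega
  | some (i, a), some (j, b) => have := hsome i a; have := hsome j b; omega

lemma cliqueStar_isBridge_hub (i : ι) : (cliqueStar ι r).IsBridge s(none, some (i, r)) := by
  refine isBridge_iff_forall_walk_mem_edges.mpr fun p => ?_
  -- `p` has to enter the clique `i`, and the root edge is the only edge entering it.
  obtain ⟨d, hd, hout, hin⟩ :=
    p.exists_boundary_dart {v | ∀ a, v ≠ some (i, a)} (by simp) (by simp)
  obtain ⟨⟨_ | ⟨j, c⟩, _ | ⟨i', a⟩⟩, hadj⟩ := d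
  · exact absurd hadj cliqueStar_not_adj_none_none
  · obtain ⟨a', ha'⟩ : ∃ a', some (i', a) = some (i, a') := by simpa using hin
    obtain ⟨rfl, rfl⟩ : i' = i ∧ a = a' := by simpa using ha'
    obtain rfl : a = r := hadj
    rw [Walk.edges_eq_map_darts]
    exact List.mem_map_of_mem hd
  · simp at hin
  · obtain ⟨a', ha'⟩ : ∃ a', some (i', a) = some (i, a') := by simpa using hin
    obtain ⟨rfl, -⟩ : i' = i ∧ a = a' := by simpa using ha'
    exact absurd (hout c) (by simp [(cliqueStar_adj_some_some.mp hadj).1])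

lemma cliqueStar_not_isBridge_some_some (hα : 2 < Nat.card α) (i : ι) (a b : α) :
    ¬(cliqueStar ι r).IsBridge s(some (i, a), some (i, b)) := by
  have : Finite α := Nat.finite_of_card_ne_zero (by omega)
  obtain ⟨c, hca, hcb⟩ : ∃ c, c ∈ ({a}ᶜ : Set α) ∧ c ≠ b :=
    Set.exists_ne_of_one_lt_ncard (by rw [Set.ncard_compl, Set.ncard_singleton]; omega) b
  have hca : a ≠ c := Ne.symm hca
  let p : (cliqueStar ι r).Walk (some (i, a)) (some (i, b)) :=
    .cons (v := some (i, c)) (by simpa using hca) (.cons (by simpa using hcb) .nil)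
  rw [isBridge_iff, reachable_deleteEdges_iff_exists_walk, not_not]
  refine ⟨p, ?_⟩
  simp [p, hca, hcb.symm]

lemma cliqueStar_isBridge_iff (hα : 2 < Nat.card α) {e : Sym2 (Option (ι × α))} :
    (cliqueStar ι r).IsBridge e ↔ e ∈ Set.range fun i => s(none, some (i, r)) := by
  refine ⟨fun he => ?_, by rintro ⟨i, rfl⟩; exact cliqueStar_isBridge_hub i⟩
  induction e using Sym2.ind with
  | _ u v =>
  have hadj : (cliqueStar ι r).Adj u v :=
    (he.reachable_iff_adj).mp (cliqueStar_connected.preconnected u v)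
  match u, v, hadj with
  | none, none, h => exact absurd h cliqueStar_not_adj_none_none
  | none, some (j, b), (h : b = r) => subst h; exact ⟨j, rfl⟩
  | some (i, a), none, (h : a = r) => subst h; exact ⟨i, Sym2.eq_swap⟩
  | some (i, a), some (j, b), ⟨(h : i = j), _⟩ =>
    subst h; exact absurd he (cliqueStar_not_isBridge_some_some hα i a b)

lemma ncard_setOf_isBridge_cliqueStar (hα : 2 < Nat.card α) :
    {e | (cliqueStar ι r).IsBridge e}.ncard = Nat.card ι := by
  have : {e | (cliqueStar ι r).IsBridge e} = Set.range fun i => s(none, some (i, r)) :=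
    Set.ext fun _ => cliqueStar_isBridge_iff hα
  rw [this, Set.ncard_range_of_injective fun i j h => by simpa using h]

end cliqueStar

theorem stmt_4 (k : ℕ) (hk : 5 ≤ k) :
    ∃ (V : Type) (_ : Fintype V) (D : SimpleGraph V),
      Fintype.card V = k ^ 2 + k - 1 ∧ D.Connected ∧
      (∀ x y : V, x ≠ y → ¬D.Adj x y →
        (2 * (Fintype.card V : ℚ) - 2 * k + 1) / k ≤ (vdeg D x : ℚ) + (vdeg D y : ℚ)) ∧
      {e : Sym2 V | D.IsBridge e}.ncard = k - 1 := by
  have hcard : Fintype.card (Option (Fin (k - 1) × Fin (k + 2))) = k ^ 2 + k - 1 := by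
    simp only [Fintype.card_option, Fintype.card_prod, Fintype.card_fin]
    zify [show 1 ≤ k by omega, show 1 ≤ k ^ 2 + k by nlinarith]
    ring
  have hbridges := ncard_setOf_isBridge_cliqueStar (ι := Fin (k - 1)) (r := (0 : Fin (k + 2)))
    (by simp only [Nat.card_eq_fintype_card, Fintype.card_fin]; omega)
  refine ⟨_, inferInstance, cliqueStar (Fin (k - 1)) (0 : Fin (k + 2)), hcard,
    cliqueStar_connected, fun x y hxy _ => ?_, by simpa using hbridges⟩
  have hsum : 2 * k ≤ vdeg (cliqueStar (Fin (k - 1)) (0 : Fin (k + 2))) x +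
      vdeg (cliqueStar (Fin (k - 1)) (0 : Fin (k + 2))) y := by
    have := min_add_le_vdeg_add_vdeg_cliqueStar (r := (0 : Fin (k + 2))) hxy
    simp only [Nat.card_eq_fintype_card, Fintype.card_fin] at this
    omega
  have hkpos : (0 : ℚ) < k := by exact_mod_cast (by omega : 0 < k)
  calc (2 * (Fintype.card _ : ℚ) - 2 * k + 1) / k = 2 * k - 1 / k := by
        rw [hcard, Nat.cast_sub (by nlinarith)]
        field_simp
        push_cast
        ring
    _ ≤ 2 * k := by linarith [one_div_pos.mpr hkpos]
    _ ≤ _ := by exact_mod_cast hsum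
end

section
/- If P is a path with n edges, then the conflict-free connection number of P equals ⌈log₂(n+1)⌉. -/
open SimpleGraph

/-!
On a path, the only path between two vertices is the segment joining them, so a conflict-free
connecting colouring of a path with `n` edges is a sequence of length `n` in which every
nonempty interval contains a colour occurring exactly once in it. In such a sequence, the
position of the colour that is unique in the whole sequence splits it into two shorter such
sequences avoiding that colour; by induction, `k` colours allow at most `2 ^ k - 1` terms.
Conversely, the ruler sequence `v₂(1), v₂(2), …, v₂(n)` works: in an interval of integers
the element of largest `2`-adic valuation is unique (two of them would have a multiple of a
higher power of `2` between them), and its values are smaller than `⌈log₂ (n + 1)⌉`.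
-/

open Finset Fin.NatCast

section ConflictFree

variable {α : Type*} [DecidableEq α]

def ConflictFreeOn (g : ℕ → α) (a b : ℕ) : Prop :=
  ∀ a' b', a ≤ a' → a' < b' → b' ≤ b → ∃ x, #{i ∈ Ico a' b' | g i = x} = 1

theorem ConflictFreeOn.mono {g : ℕ → α} {a b a' b' : ℕ} (hg : ConflictFreeOn g a b)
    (ha : a ≤ a') (hb : b' ≤ b) : ConflictFreeOn g a' b' :=
  fun c d hc hcd hd => hg c d (ha.trans hc) hcd (hd.trans hb)

theorem ConflictFreeOn.congr {g g' : ℕ → α} {a b : ℕ} (hg : ConflictFreeOn g a b)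
    (h : ∀ i ∈ Ico a b, g i = g' i) : ConflictFreeOn g' a b := by
  intro a' b' ha hab hb
  obtain ⟨x, hx⟩ := hg a' b' ha hab hb
  refine ⟨x, ?_⟩
  rwa [filter_congr fun i hi => show g' i = x ↔ g i = x by rw [h i (Ico_subset_Ico ha hb hi)]]

theorem ConflictFreeOn.sub_lt_two_pow_card {g : ℕ → α} {a b : ℕ} (hg : ConflictFreeOn g a b)
    (S : Finset α) (hS : ∀ i ∈ Ico a b, g i ∈ S) : b - a < 2 ^ #S := by
  induction S using Finset.strongInduction generalizing a b with
  | H S ih =>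
  rcases le_or_gt b a with hba | hab
  · rw [Nat.sub_eq_zero_of_le hba]
    exact Nat.two_pow_pos _
  obtain ⟨x, hx⟩ := hg a b le_rfl hab le_rfl
  obtain ⟨i₀, hi₀⟩ := card_eq_one.mp hx
  have mem_iff (i : ℕ) : i ∈ Ico a b ∧ g i = x ↔ i = i₀ := by
    rw [← mem_filter (p := (g · = x)), hi₀, mem_singleton]
  obtain ⟨hi₀_mem, hgi₀⟩ := (mem_iff i₀).mpr rfl
  rw [mem_Ico] at hi₀_mem
  have hxS : x ∈ S := hgi₀ ▸ hS i₀ (mem_Ico.mpr hi₀_mem)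
  have avoid (a' b' : ℕ) (ha : a ≤ a') (hb : b' ≤ b) (hout : i₀ < a' ∨ b' ≤ i₀) :
      ∀ i ∈ Ico a' b', g i ∈ S.erase x := by
    intro i hi
    rw [mem_Ico] at hi
    refine mem_erase.mpr ⟨fun hgi => ?_, hS i (mem_Ico.mpr ⟨by omega, by omega⟩)⟩
    have := (mem_iff i).mp ⟨mem_Ico.mpr ⟨by omega, by omega⟩, hgi⟩
    omega
  have hleft := ih _ (erase_ssubset hxS) (hg.mono le_rfl hi₀_mem.2.le)
    (avoid a i₀ le_rfl hi₀_mem.2.le (by omega))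
  have hright := ih _ (erase_ssubset hxS) (hg.mono (by omega) le_rfl)
    (avoid (i₀ + 1) b (by omega) le_rfl (by omega))
  rw [← card_erase_add_one hxS, pow_succ]
  omega

end ConflictFree

theorem exists_padicValNat_two_gt_between {x y m : ℕ} (hx : x ≠ 0) (hy : y ≠ 0)
    (hxy : x ≠ y) (hvx : padicValNat 2 x = m) (hvy : padicValNat 2 y = m) :
    ∃ z, min x y < z ∧ z < max x y ∧ m < padicValNat 2 z := by
  wlog hlt : x < y generalizing x y
  · simpa only [min_comm, max_comm] using
      this hy hx hxy.symm hvy hvx (lt_of_le_of_ne (not_lt.mp hlt) hxy.symm)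
  rw [min_eq_left hlt.le, max_eq_right hlt.le]
  obtain ⟨c, rfl⟩ : 2 ^ m ∣ x := hvx ▸ pow_padicValNat_dvd
  obtain ⟨d, rfl⟩ : 2 ^ m ∣ y := hvy ▸ pow_padicValNat_dvd
  have hm : 0 < 2 ^ m := Nat.two_pow_pos m
  have val_gt {e : ℕ} (he : e ≠ 0) (h2 : 2 ∣ e) : m < padicValNat 2 (2 ^ m * e) := by
    obtain ⟨f, rfl⟩ := h2
    exact (padicValNat_dvd_iff_le (n := m + 1) (by positivity)).mp ⟨f, by ring⟩
  have hc : ¬ 2 ∣ c := fun h2 => (val_gt (by rintro rfl; simp at hx) h2).ne' hvx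
  have hd : ¬ 2 ∣ d := fun h2 => (val_gt (by rintro rfl; simp at hy) h2).ne' hvy
  have hcd : c < d := Nat.lt_of_mul_lt_mul_left hlt
  -- `c < d` are both odd, so `c + 1` is even and lies strictly between them
  exact ⟨2 ^ m * (c + 1), (Nat.mul_lt_mul_left hm).mpr (by omega),
    (Nat.mul_lt_mul_left hm).mpr (by omega), val_gt (by omega) (by omega)⟩

theorem conflictFreeOn_padicValNat_two_succ (a b : ℕ) :
    ConflictFreeOn (fun i => padicValNat 2 (i + 1)) a b := by
  intro a' b' _ hab _
  obtain ⟨i₀, hi₀, hmax⟩ := exists_max_image (Ico a' b') (fun i => padicValNat 2 (i + 1))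
    (nonempty_Ico.mpr hab)
  refine ⟨padicValNat 2 (i₀ + 1), card_eq_one.mpr ⟨i₀, eq_singleton_iff_unique_mem.mpr
    ⟨mem_filter.mpr ⟨hi₀, rfl⟩, fun j hj => ?_⟩⟩⟩
  obtain ⟨hj, hv⟩ := mem_filter.mp hj
  rw [mem_Ico] at hi₀ hj
  by_contra hne
  obtain ⟨z, hz₁, hz₂, hz⟩ := exists_padicValNat_two_gt_between j.succ_ne_zero
    i₀.succ_ne_zero (by omega) hv rfl
  have := hmax (z - 1) (mem_Ico.mpr ⟨by omega, by omega⟩)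
  rw [Nat.sub_add_cancel (by omega)] at this
  omega

theorem padicValNat_two_lt_clog {t m : ℕ} (ht : t ≠ 0) (htm : t < m) :
    padicValNat 2 t < Nat.clog 2 m :=
  (Nat.lt_clog_iff_pow_lt one_lt_two).mpr
    ((Nat.le_of_dvd (Nat.pos_of_ne_zero ht) pow_padicValNat_dvd).trans_lt htm)

namespace SimpleGraph

variable {n : ℕ}

/-- Only `i < n` gives an edge: the casts to `Fin (n + 1)` reduce modulo `n + 1`. -/
def pathGraphEdge (n i : ℕ) : Sym2 (Fin (n + 1)) :=
  s((i : Fin (n + 1)), ((i + 1 : ℕ) : Fin (n + 1)))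

theorem pathGraphEdge_mem_edgeSet {i : ℕ} (hi : i < n) :
    pathGraphEdge n i ∈ (pathGraph (n + 1)).edgeSet := by
  rw [pathGraphEdge, mem_edgeSet, pathGraph_adj, Fin.val_cast_of_lt (by omega),
    Fin.val_cast_of_lt (by omega)]
  exact Or.inl rfl

theorem val_sup_pathGraphEdge {i : ℕ} (hi : i < n) : ((pathGraphEdge n i).sup : ℕ) = i + 1 := by
  rw [pathGraphEdge, Sym2.sup_mk, Fin.coe_max, Fin.val_cast_of_lt (by omega),
    Fin.val_cast_of_lt (by omega)]
  omega

theorem Walk.mem_support_pathGraph_of_le_of_le {x y : Fin n} (w : (pathGraph n).Walk x y)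
    {m : Fin n} (hxm : x ≤ m) (hmy : m ≤ y) : m ∈ w.support := by
  induction w with
  | nil => simp [le_antisymm hxm hmy]
  | @cons u z v hadj q ih =>
    rcases hxm.eq_or_lt with rfl | hum
    · exact start_mem_support _
    · rw [pathGraph_adj] at hadj
      exact List.mem_cons_of_mem _ (ih (Fin.le_def.mpr (by omega)) hmy)

theorem Walk.IsPath.edges_eq_pathGraphEdge {u v : Fin (n + 1)}
    {p : (pathGraph (n + 1)).Walk u v} (hp : p.IsPath) (huv : u ≤ v) :
    p.edges = (List.range' u (v - u)).map (pathGraphEdge n) := by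
  induction p with
  | nil => simp
  | @cons u z v hadj q ih =>
    obtain ⟨hq, hu⟩ := cons_isPath_iff _ _ |>.mp hp
    have huv : u < v := huv.lt_of_ne fun h => hu (h ▸ q.end_mem_support)
    rw [pathGraph_adj] at hadj
    rcases hadj with hz | hz
    · have hedge : pathGraphEdge n u = s(u, z) := by
        rw [pathGraphEdge, Fin.cast_val_eq_self, hz, Fin.cast_val_eq_self]
      rw [edges_cons, ih hq (Fin.le_def.mpr (by omega)), ← hz, ← hedge, ← List.map_cons,
        ← List.range'_succ]
      congr 2
      omega
    · -- a path stepping down from `u` towards `v > u` would have to pass through `u` again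
      exact absurd (q.mem_support_pathGraph_of_le_of_le (Fin.le_def.mpr (by omega)) huv.le) hu

theorem isCFConnected_pathGraph_iff (c : Sym2 (Fin (n + 1)) → ℕ) :
    IsCFConnected (pathGraph (n + 1)) c ↔
      ConflictFreeOn (fun i => c (pathGraphEdge n i)) 0 n := by
  have count_eq {u v : Fin (n + 1)} {p : (pathGraph (n + 1)).Walk u v} (hp : p.IsPath)
      (huv : u ≤ v) (x : ℕ) : (p.edges.filter (fun e => c e = x)).length =
        #{i ∈ Ico (u : ℕ) v | c (pathGraphEdge n i) = x} := by
    rw [hp.edges_eq_pathGraphEdge huv, List.filter_map, List.length_map]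
    rfl
  constructor
  · intro hcf a b _ hab hbn
    obtain ⟨p, hp, x, hx⟩ := hcf ⟨a, by omega⟩ ⟨b, by omega⟩ (Fin.ne_of_val_ne hab.ne)
    exact ⟨x, (count_eq hp (Fin.le_def.mpr hab.le) x).symm.trans hx⟩
  · intro hg
    have of_lt {u v : Fin (n + 1)} (huv : u < v) : ∃ p : (pathGraph (n + 1)).Walk u v,
        p.IsPath ∧ ∃ x, (p.edges.filter (fun e => c e = x)).length = 1 := by
      obtain ⟨p, hp⟩ := (pathGraph_preconnected _ u v).exists_isPath
      obtain ⟨x, hx⟩ := hg u v (Nat.zero_le _) huv (by omega)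
      exact ⟨p, hp, x, (count_eq hp huv.le x).trans hx⟩
    intro u v huv
    rcases huv.lt_or_gt with h | h
    · exact of_lt h
    · obtain ⟨p, hp, x, hx⟩ := of_lt h
      refine ⟨p.reverse, hp.reverse, x, ?_⟩
      rwa [Walk.edges_reverse, List.filter_reverse, List.length_reverse]

theorem clog_le_of_isCFConnected_pathGraph {c : Sym2 (Fin (n + 1)) → ℕ} {k : ℕ}
    (hc : ∀ e ∈ (pathGraph (n + 1)).edgeSet, c e < k)
    (hcf : IsCFConnected (pathGraph (n + 1)) c) : Nat.clog 2 (n + 1) ≤ k := by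
  have := ((isCFConnected_pathGraph_iff c).mp hcf).sub_lt_two_pow_card (range k)
    fun i hi => mem_range.mpr (hc _ (pathGraphEdge_mem_edgeSet (mem_Ico.mp hi).2))
  rw [card_range, Nat.sub_zero] at this
  exact Nat.clog_le_of_le_pow this

/-- On `pathGraph (n + 1)` the edges, read in order, carry the ruler sequence
`v₂(1), v₂(2), …, v₂(n)`. -/
def rulerColoring {m : ℕ} (e : Sym2 (Fin m)) : ℕ := padicValNat 2 e.sup

theorem rulerColoring_lt_clog {e : Sym2 (Fin (n + 1))} (he : e ∈ (pathGraph (n + 1)).edgeSet) :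
    rulerColoring e < Nat.clog 2 (n + 1) := by
  induction e using Sym2.ind with
  | h x y =>
    rw [mem_edgeSet, pathGraph_adj] at he
    refine padicValNat_two_lt_clog ?_ (s(x, y).sup).isLt
    rw [Sym2.sup_mk, Fin.coe_max]
    omega

theorem isCFConnected_rulerColoring (n : ℕ) :
    IsCFConnected (pathGraph (n + 1)) rulerColoring :=
  (isCFConnected_pathGraph_iff _).mpr <| (conflictFreeOn_padicValNat_two_succ 0 n).congr
    fun i hi => by rw [rulerColoring, val_sup_pathGraphEdge (mem_Ico.mp hi).2]

end SimpleGraph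

theorem stmt_5 (n : ℕ) :
    cfcNum (SimpleGraph.pathGraph (n + 1)) = Nat.clog 2 (n + 1) := by
  have ruler_mem : Nat.clog 2 (n + 1) ∈ {k | ∃ c : Sym2 (Fin (n + 1)) → ℕ,
      (∀ e ∈ (pathGraph (n + 1)).edgeSet, c e < k) ∧ IsCFConnected (pathGraph (n + 1)) c} :=
    ⟨rulerColoring, fun _ he => rulerColoring_lt_clog he, isCFConnected_rulerColoring n⟩
  exact le_antisymm (Nat.sInf_le ruler_mem) <| le_csInf ⟨_, ruler_mem⟩
    fun _ ⟨_, hc, hcf⟩ => clog_le_of_isCFConnected_pathGraph hc hcf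
end

section
/- If G is a connected edge-colored graph using two colors that is conflict-free connected, then the subgraph C(G) of G induced by the set of cut edges of G is a linear forest in which every component has at most three edges. -/
/-!
In a connected graph a path made of bridges is the only path between its ends, so a conflict-free
path joining the ends of a path of `C(G)` is that path itself. For two bridges sharing a vertex
this forces distinct colours: with two colours a vertex meets at most two bridges, and colours
alternate along a path of bridges, so four bridges in a row would read `a b a b`, where no colour
occurs exactly once. Acyclicity holds since every edge of `C(G)` is a bridge of `C(G)` itself.
-/

open SimpleGraph

namespace SimpleGraph.Walk

variable {V : Type*} {G : SimpleGraph V}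

/-- The first bridge of `q` separates `u` from the rest of `q`, so `p` must cross it, and being a
path it does so with its first edge. -/
theorem IsPath.eq_of_forall_isBridge {u v : V} {p q : G.Walk u v} (hp : p.IsPath)
    (hq : q.IsPath) (hbr : ∀ e ∈ q.edges, G.IsBridge e) : p = q := by
  induction q with
  | nil => exact isPath_iff_nil.mp hp |>.eq_nil
  | @cons u w v huw q ih =>
    rw [cons_isPath_iff] at hq
    have hmem : s(u, w) ∈ p.edges := by
      have := isBridge_iff_forall_walk_mem_edges.mp (hbr _ (by simp)) (p.append q.reverse)
      rw [edges_append, edges_reverse, List.mem_append, List.mem_reverse] at this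
      exact this.resolve_right fun h ↦ hq.2 (q.fst_mem_support_of_mem_edges h)
    cases p with
    | nil => simp at hmem
    | cons huw' p =>
      have hw := hp.eq_snd_of_mem_edges hmem
      rw [snd_cons] at hw
      subst hw
      rw [cons_isPath_iff] at hp
      rw [ih hp.1 hq.1 fun e he ↦ hbr e (List.mem_cons_of_mem _ he)]

end SimpleGraph.Walk

section bridgeGraph

variable {V : Type*} {G : SimpleGraph V}

lemma isBridge_of_mem_edgeSet_bridgeGraph {e : Sym2 V} (he : e ∈ (bridgeGraph G).edgeSet) :
    G.IsBridge e := by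
  rw [bridgeGraph, edgeSet_fromEdgeSet] at he
  exact he.1

lemma bridgeGraph_adj {u v : V} : (bridgeGraph G).Adj u v ↔ G.IsBridge s(u, v) :=
  ⟨fun h ↦ isBridge_of_mem_edgeSet_bridgeGraph h,
    fun h ↦ ⟨h, fun huv ↦ isBridge_iff.mp (huv ▸ h) (Reachable.refl _)⟩⟩

/-- Mathlib's `IsBridge` also holds for pairs in different components, hence the connectivity. -/
lemma SimpleGraph.Connected.bridgeGraph_le (hG : G.Connected) : bridgeGraph G ≤ G :=
  fun u v h ↦ (bridgeGraph_adj.mp h).reachable_iff_adj.mp (hG.preconnected u v)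

lemma SimpleGraph.Connected.isAcyclic_bridgeGraph (hG : G.Connected) :
    (bridgeGraph G).IsAcyclic :=
  isAcyclic_iff_forall_isBridge.mpr fun _ he ↦
    (isBridge_of_mem_edgeSet_bridgeGraph he).anti hG.bridgeGraph_le

end bridgeGraph

namespace IsCFConnected

variable {V : Type*} {G : SimpleGraph V} {c : Sym2 V → ℕ}

theorem exists_color_unique_of_isPath_bridgeGraph (h : IsCFConnected G c) (hG : G.Connected)
    {u v : V} (huv : u ≠ v) {q : (bridgeGraph G).Walk u v} (hq : q.IsPath) :
    ∃ col : ℕ, (q.edges.filter (fun e => c e = col)).length = 1 := by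
  obtain ⟨p, hp, hcol⟩ := h u v huv
  have hpq : p = q.mapLe hG.bridgeGraph_le :=
    hp.eq_of_forall_isBridge (hq.mapLe _) fun e he ↦ isBridge_of_mem_edgeSet_bridgeGraph <|
      q.edges_subset_edgeSet <| (Walk.edges_mapLe_eq_edges _ _) ▸ he
  rwa [hpq, Walk.edges_mapLe_eq_edges] at hcol

theorem color_ne_of_bridgeGraph_adj (h : IsCFConnected G c) (hG : G.Connected) {x v y : V}
    (hxv : (bridgeGraph G).Adj x v) (hvy : (bridgeGraph G).Adj v y) (hxy : x ≠ y) :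
    c s(x, v) ≠ c s(v, y) := by
  have hq : (Walk.cons hxv (Walk.cons hvy .nil)).IsPath := by
    simp [Walk.cons_isPath_iff, hxv.ne, hvy.ne, hxy]
  obtain ⟨col, hcol⟩ := h.exists_color_unique_of_isPath_bridgeGraph hG hxy hq
  intro heq
  simp only [Walk.edges_cons, Walk.edges_nil, List.filter_cons, List.filter_nil, heq] at hcol
  by_cases hcol' : c s(v, y) = col <;> simp [hcol'] at hcol

theorem ncard_neighborSet_bridgeGraph_le (h : IsCFConnected G c) (hG : G.Connected) {k : ℕ}
    (hc : ∀ e ∈ G.edgeSet, c e < k) (v : V) : ((bridgeGraph G).neighborSet v).ncard ≤ k := by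
  have hmaps : ∀ x ∈ (bridgeGraph G).neighborSet v, c s(v, x) ∈ (Finset.range k : Set ℕ) :=
    fun x hx ↦ by simpa using hc _ (hG.bridgeGraph_le hx)
  have hinj : Set.InjOn (fun x ↦ c s(v, x)) ((bridgeGraph G).neighborSet v) := by
    intro x hx y hy hxy
    by_contra hne
    refine h.color_ne_of_bridgeGraph_adj hG ((bridgeGraph G).adj_symm hx) hy hne ?_
    rwa [Sym2.eq_swap]
  simpa using Set.ncard_le_ncard_of_injOn _ hmaps hinj (Finset.finite_toSet _)

theorem not_isPath_bridgeGraph_four (h : IsCFConnected G c) (hG : G.Connected)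
    (hc : ∀ e ∈ G.edgeSet, c e < 2) {v₀ v₁ v₂ v₃ v₄ : V} {h₁ : (bridgeGraph G).Adj v₀ v₁}
    {h₂ : (bridgeGraph G).Adj v₁ v₂} {h₃ : (bridgeGraph G).Adj v₂ v₃}
    {h₄ : (bridgeGraph G).Adj v₃ v₄}
    (hq : (Walk.cons h₁ (Walk.cons h₂ (Walk.cons h₃ (Walk.cons h₄ .nil)))).IsPath) : False := by
  have hsupp := hq.support_nodup
  simp only [Walk.support_cons, Walk.support_nil, List.nodup_cons, List.mem_cons,
    List.not_mem_nil, not_or, not_false_eq_true, and_true, List.nodup_nil] at hsupp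
  obtain ⟨⟨-, h₀₂, -, h₀₄⟩, ⟨-, h₁₃, -⟩, ⟨-, h₂₄⟩, -⟩ := hsupp
  have d₁ := h.color_ne_of_bridgeGraph_adj hG h₁ h₂ h₀₂
  have d₂ := h.color_ne_of_bridgeGraph_adj hG h₂ h₃ h₁₃
  have d₃ := h.color_ne_of_bridgeGraph_adj hG h₃ h₄ h₂₄
  have := hc s(v₀, v₁) (hG.bridgeGraph_le h₁)
  have := hc s(v₁, v₂) (hG.bridgeGraph_le h₂)
  have := hc s(v₂, v₃) (hG.bridgeGraph_le h₃)
  have := hc s(v₃, v₄) (hG.bridgeGraph_le h₄)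
  have e₃ : c s(v₂, v₃) = c s(v₀, v₁) := by omega
  have e₄ : c s(v₃, v₄) = c s(v₁, v₂) := by omega
  obtain ⟨col, hcol⟩ := h.exists_color_unique_of_isPath_bridgeGraph hG h₀₄ hq
  simp only [Walk.edges_cons, Walk.edges_nil, List.filter_cons, List.filter_nil, e₃, e₄] at hcol
  by_cases k₁ : c s(v₀, v₁) = col <;> by_cases k₂ : c s(v₁, v₂) = col <;> simp [k₁, k₂] at hcol

theorem length_le_three_of_isPath_bridgeGraph (h : IsCFConnected G c) (hG : G.Connected)
    (hc : ∀ e ∈ G.edgeSet, c e < 2) {u v : V} {q : (bridgeGraph G).Walk u v} (hq : q.IsPath) :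
    q.length ≤ 3 := by
  obtain _ | ⟨h₁, _ | ⟨h₂, _ | ⟨h₃, _ | ⟨h₄, q⟩⟩⟩⟩ := q
  case cons.cons.cons.cons =>
    have hprefix : (Walk.cons h₁ (Walk.cons h₂ (Walk.cons h₃ (Walk.cons h₄ .nil)))).IsPath :=
      (Walk.isPath_def _).mpr <| hq.support_nodup.sublist <|
        .cons_cons _ <| .cons_cons _ <| .cons_cons _ <| .cons_cons _ <|
          List.singleton_sublist.mpr q.start_mem_support
    exact (h.not_isPath_bridgeGraph_four hG hc hprefix).elim
  all_goals simp

end IsCFConnected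

theorem stmt_6_general {V : Type*} (G : SimpleGraph V) (hG : G.Connected)
    (c : Sym2 V → ℕ) (hc : ∀ e ∈ G.edgeSet, c e < 2) (h : IsCFConnected G c) :
    IsLinearForest (bridgeGraph G) ∧
      ∀ (u v : V) (p : (bridgeGraph G).Walk u v), p.IsPath → p.length ≤ 3 :=
  ⟨⟨hG.isAcyclic_bridgeGraph, h.ncard_neighborSet_bridgeGraph_le hG hc⟩,
    fun _ _ _ hp ↦ h.length_le_three_of_isPath_bridgeGraph hG hc hp⟩

theorem stmt_6 {V : Type*} [Fintype V] (G : SimpleGraph V) (hG : G.Connected)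
    (c : Sym2 V → ℕ) (hc : ∀ e ∈ G.edgeSet, c e < 2) (h : IsCFConnected G c) :
    IsLinearForest (bridgeGraph G) ∧
      ∀ (u v : V) (p : (bridgeGraph G).Walk u v), p.IsPath → p.length ≤ 3 :=
  stmt_6_general G hG c hc h
end

section
/- If G is a 2-edge-connected non-complete graph, then cfc(G) = 2. -/
open SimpleGraph

/-
Take a spanning tree `T` of `G` and colour its edges `0` and all other edges `1`. For `u ≠ v`,
let `uw` be the first edge of the tree path from `u` to `v`. Deleting `uw` splits `T` into the
side of `u` and the side of `w ∋ v`. Since `uw` is not a bridge of `G`, some edge `xy ≠ uw` of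
`G` crosses between the two sides, and it cannot be a tree edge. The tree path from `u` to `x`,
the edge `xy` and the tree path from `y` to `v` form a path with exactly one edge of colour `1`.
One colour is never enough: on a non-adjacent pair every path has length at least two, so no
colour appears on it exactly once.
-/

namespace SimpleGraph

variable {V : Type*} {G H T : SimpleGraph V}

lemma Reachable.reachable_deleteEdges_or {z x : V} (h : G.Reachable z x) (y : V) :
    (G.deleteEdges {s(x, y)}).Reachable z x ∨ (G.deleteEdges {s(x, y)}).Reachable z y := by
  obtain ⟨p⟩ := h
  induction p with
  | nil => exact .inl .rfl
  | @cons z c x hzc p ih =>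
    by_cases he : s(z, c) = s(x, y)
    · rcases Sym2.eq_iff.mp he with ⟨rfl, -⟩ | ⟨rfl, -⟩
      · exact .inl .rfl
      · exact .inr .rfl
    · have hzc' : (G.deleteEdges {s(x, y)}).Reachable z c :=
        (deleteEdges_adj.mpr ⟨hzc, he⟩).reachable
      exact ih.imp hzc'.trans hzc'.trans

lemma exists_adj_across_bridge (hT : T.Connected) {a b : V}
    (hTb : T.IsBridge s(a, b)) (hGb : ¬G.IsBridge s(a, b)) :
    ∃ x y, G.Adj x y ∧ ¬T.Adj x y ∧ (T.deleteEdges {s(a, b)}).Reachable a x ∧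
      (T.deleteEdges {s(a, b)}).Reachable b y := by
  set H := T.deleteEdges {s(a, b)}
  obtain ⟨W⟩ := not_not.mp (isBridge_iff.not.mp hGb)
  obtain ⟨d, -, hx, hy⟩ := W.exists_boundary_dart {z | H.Reachable a z} .rfl hTb
  obtain ⟨hxy, hne⟩ := deleteEdges_adj.mp d.adj
  refine ⟨d.fst, d.snd, hxy, fun hT' ↦ hy (hx.trans (deleteEdges_adj.mpr ⟨hT', hne⟩).reachable),
    hx, ?_⟩
  exact ((hT.preconnected d.snd a).reachable_deleteEdges_or b).resolve_left (hy ·.symm) |>.symm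

lemma exists_isPath_edges_filter_length_eq_one (hHG : H ≤ G) {u x y v : V}
    (hux : H.Reachable u x) (hyv : H.Reachable y v) (hxy : G.Adj x y) (hsep : ¬H.Reachable x y)
    {c : Sym2 V → ℕ} {k : ℕ} (hck : c s(x, y) = k) (hH : ∀ e ∈ H.edgeSet, c e ≠ k) :
    ∃ p : G.Walk u v, p.IsPath ∧ (p.edges.filter (fun e ↦ c e = k)).length = 1 := by
  classical
  obtain ⟨p, hp⟩ := hux.exists_isPath
  obtain ⟨q, hq⟩ := hyv.exists_isPath
  refine ⟨(p.mapLe hHG).append (.cons hxy (q.mapLe hHG)), ?_, ?_⟩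
  · rw [Walk.isPath_def, Walk.support_append, Walk.support_cons, List.tail_cons,
      Walk.support_mapLe_eq_support, Walk.support_mapLe_eq_support]
    refine hp.support_nodup.append hq.support_nodup fun z hzp hzq ↦ hsep ?_
    exact (Walk.reachable (p.dropUntil z hzp)).symm.trans (q.takeUntil z hzq).reachable.symm
  · have hoff : ∀ r : List (Sym2 V), (∀ e ∈ r, e ∈ H.edgeSet) →
        r.filter (fun e ↦ c e = k) = [] := fun r hr ↦
      List.filter_eq_nil_iff.mpr fun e he ↦ by simpa using hH e (hr e he)
    simp only [Walk.edges_append, Walk.edges_cons, Walk.edges_mapLe_eq_edges, List.filter_append,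
      List.filter_cons, hck, decide_true, if_true, hoff _ p.edges_subset_edgeSet,
      hoff _ q.edges_subset_edgeSet]
    rfl

lemma isCFConnected_indicator_compl_edgeSet (hTG : T ≤ G) (hT : T.IsTree)
    (hG : ∀ e, ¬G.IsBridge e) : IsCFConnected G (T.edgeSetᶜ.indicator 1) := by
  intro u v huv
  obtain ⟨p, hp⟩ := hT.connected.exists_isPath u v
  cases p with
  | nil => exact absurd rfl huv
  | @cons _ w _ huw q =>
    set H := T.deleteEdges {s(u, w)}
    have hTb : T.IsBridge s(u, w) := isAcyclic_iff_forall_adj_isBridge.mp hT.isAcyclic huw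
    have hwv : H.Reachable w v := ⟨q.toDeleteEdge s(u, w) fun h ↦
      ((Walk.cons_isPath_iff huw q).mp hp).2 (q.fst_mem_support_of_mem_edges h)⟩
    obtain ⟨x, y, hxy, hxyT, hux, hwy⟩ := exists_adj_across_bridge hT.connected hTb (hG _)
    obtain ⟨r, hr, hr1⟩ := exists_isPath_edges_filter_length_eq_one ((deleteEdges_le _).trans hTG)
      hux (hwy.symm.trans hwv) hxy (fun hxy' ↦ hTb (hux.trans (hxy'.trans hwy.symm)))
      (c := T.edgeSetᶜ.indicator 1) (k := 1) (by simp [hxyT])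
      (fun e he ↦ by simp [edgeSet_mono (deleteEdges_le _) he])
    exact ⟨r, hr, 1, hr1⟩

lemma eq_top_of_isCFConnected_of_forall_eq {c : Sym2 V → ℕ} {k : ℕ}
    (hc : ∀ e ∈ G.edgeSet, c e = k) (hcf : IsCFConnected G c) : G = ⊤ := by
  refine eq_top_iff.mpr fun u v huv ↦ ?_
  obtain ⟨p, -, col, hcol⟩ := hcf u v huv
  have hfilter : p.edges.filter (fun e ↦ c e = col) = if k = col then p.edges else [] := by
    split_ifs with hk
    · exact List.filter_eq_self.mpr fun e he ↦ by simp [hc e (p.edges_subset_edgeSet he), hk]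
    · exact List.filter_eq_nil_iff.mpr fun e he ↦ by simp [hc e (p.edges_subset_edgeSet he), hk]
  rw [hfilter] at hcol
  split_ifs at hcol
  exact p.adj_of_length_eq_one (p.length_edges ▸ hcol)

end SimpleGraph

theorem stmt_8_general {V : Type*} (G : SimpleGraph V)
    (hconn : G.Connected)
    (hbridge : ∀ e : Sym2 V, ¬G.IsBridge e) (hnc : G ≠ ⊤) :
    cfcNum G = 2 := by
  obtain ⟨T, hTG, hT⟩ := hconn.exists_isTree_le
  have h2 : 2 ∈ {k | ∃ c : Sym2 V → ℕ, (∀ e ∈ G.edgeSet, c e < k) ∧ IsCFConnected G c} :=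
    ⟨T.edgeSetᶜ.indicator 1, fun e _ ↦ by by_cases he : e ∈ T.edgeSet <;> simp [he],
      isCFConnected_indicator_compl_edgeSet hTG hT hbridge⟩
  refine le_antisymm (Nat.sInf_le h2) (le_csInf ⟨2, h2⟩ ?_)
  rintro k ⟨c, hck, hcf⟩
  by_contra! hk
  exact hnc (eq_top_of_isCFConnected_of_forall_eq (k := 0)
    (fun e he ↦ by have := hck e he; omega) hcf)

theorem stmt_8 {V : Type*} [Fintype V] (G : SimpleGraph V)
    (hconn : G.Connected) (hcard : 2 ≤ Fintype.card V)
    (hbridge : ∀ e : Sym2 V, ¬G.IsBridge e) (hnc : G ≠ ⊤) :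
    cfcNum G = 2 :=
  stmt_8_general G hconn hbridge hnc
end

section
/- For every t ≥ 3, let S be the graph on n = 5t vertices obtained from a path v₀v₁v₂v₃v₄v₅ by attaching a complete graph K_t at each of v₀, v₁, v₄, v₅ (identifying one vertex of each K_t with the path vertex) and gluing one more K_t along the edge v₂v₃. Then δ(S) = (n−5)/5, the cut edges of S induce a linear forest with two components of order 3, and cfc(S) ≥ 3. -/
open SimpleGraph

/-!
Every edge inside a copy of `K_t` lies on a triangle, while the four path edges
`v₀v₁, v₁v₂, v₃v₄, v₄v₅` are the only edges from the copies of index `≤ n` to those of index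
`> n` (`n = 0, 1, 2, 3`). Hence these four edges are exactly the bridges, forming the two paths
`v₀v₁v₂` and `v₃v₄v₅`, every walk from `v₀` to `v₅` uses all four, and the only paths from `v₀`
to `v₂` and from `v₃` to `v₅` are `v₀v₁v₂` and `v₃v₄v₅`. With two colours these two short paths
force `v₀v₁, v₁v₂` to get different colours and likewise `v₃v₄, v₄v₅`, so on every `v₀`–`v₅`
path each colour occurs at least twice or not at all.
-/

namespace SimpleGraph

variable {W : Type*} {G : SimpleGraph W}

theorem Walk.mem_edges_of_boundary {P : Set W} {e : Sym2 W}
    (he : ∀ ⦃x y⦄, G.Adj x y → x ∈ P → y ∉ P → s(x, y) = e) {u v : W} (p : G.Walk u v)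
    (hu : u ∈ P) (hv : v ∉ P) : e ∈ p.edges := by
  obtain ⟨d, hd, hdP, hdP'⟩ := p.exists_boundary_dart P hu hv
  rw [← he d.adj hdP hdP']
  exact List.mem_map_of_mem hd

theorem Reachable.mem_of_forall_adj {P : Set W} (hP : ∀ ⦃x y⦄, G.Adj x y → x ∈ P → y ∈ P)
    {u v : W} (h : G.Reachable u v) (hu : u ∈ P) : v ∈ P := by
  by_contra hv
  obtain ⟨d, -, hdP, hdP'⟩ := h.some.exists_boundary_dart P hu hv
  exact hdP' (hP d.adj hdP)

theorem ConnectedComponent.supp_connectedComponentMk_eq {P : Set W}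
    (hP : ∀ ⦃x y⦄, G.Adj x y → x ∈ P → y ∈ P) {a : W} (ha : a ∈ P)
    (hreach : ∀ x ∈ P, G.Reachable a x) : (G.connectedComponentMk a).supp = P := by
  ext y
  rw [ConnectedComponent.mem_supp_iff, ConnectedComponent.eq]
  exact ⟨fun h => h.symm.mem_of_forall_adj hP ha, fun h => (hreach y h).symm⟩

theorem Walk.IsPath.exists_edges_eq_cons_of_boundary {P : Set W} {u w v : W}
    (he : ∀ ⦃x y⦄, G.Adj x y → x ∈ P → y ∉ P → s(x, y) = s(u, w)) (hw : w ∉ P)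
    {p : G.Walk u v} (hp : p.IsPath) (hu : u ∈ P) (hv : v ∉ P) :
    ∃ q : G.Walk w v, q.IsPath ∧ p.edges = s(u, w) :: q.edges := by
  cases p with
  | nil => exact absurd hu hv
  | @cons _ b _ hub q =>
    rw [Walk.cons_isPath_iff] at hp
    by_cases hb : b ∈ P
    · exact absurd (q.fst_mem_support_of_mem_edges (q.mem_edges_of_boundary he hb hv)) hp.2
    · obtain rfl := Sym2.congr_right.1 (he hub hu hb)
      exact ⟨q, hp.1, rfl⟩

theorem bridgeGraph_le (hG : G.Preconnected) : bridgeGraph G ≤ G := fun u v h =>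
  ((fromEdgeSet_adj _).1 h).1.reachable_iff_adj.1 (hG u v)

theorem isAcyclic_bridgeGraph (hG : G.Preconnected) : (bridgeGraph G).IsAcyclic :=
  isAcyclic_iff_forall_adj_isBridge.2 fun _ _ h =>
    ((fromEdgeSet_adj _).1 h).1.anti (bridgeGraph_le hG)

theorem isCFConnected_of_injective (hG : G.Connected) {c : Sym2 W → ℕ}
    (hc : c.Injective) : IsCFConnected G c := by
  classical
  intro u v huv
  obtain ⟨p, hp⟩ := (hG.preconnected u v).some.toPath
  obtain ⟨e, he⟩ := List.exists_mem_of_ne_nil p.edges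
    (Walk.edges_eq_nil.not.2 (Walk.not_nil_of_ne huv))
  refine ⟨p, hp, c e, ?_⟩
  rw [List.filter_congr (q := (· == e)) fun x _ => by simp only [hc.eq_iff, beq_eq_decide],
    ← List.count_eq_length_filter, List.count_eq_one_of_mem hp.isTrail.edges_nodup he]

theorem le_cfcNum [Finite W] (hG : G.Connected) {m : ℕ}
    (h : ∀ n c, (∀ e ∈ G.edgeSet, c e < n) → IsCFConnected G c → m ≤ n) : m ≤ cfcNum G := by
  have e := Finite.equivFin (Sym2 W)
  exact le_csInf ⟨_, fun x => (e x : ℕ), fun x _ => (e x).isLt,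
    isCFConnected_of_injective hG fun x y hxy => e.injective (Fin.ext hxy)⟩
    fun n ⟨c, hc, hcf⟩ => h n c hc hcf

theorem IsCFConnected.apply_ne_of_forall_edges_eq {c : Sym2 W → ℕ} (hc : IsCFConnected G c)
    {u v : W} (huv : u ≠ v) {a b : Sym2 W} (h : ∀ p : G.Walk u v, p.IsPath → p.edges = [a, b]) :
    c a ≠ c b := by
  obtain ⟨p, hp, col, hcol⟩ := hc u v huv
  rw [h p hp] at hcol
  intro hab
  by_cases ha : c a = col <;> simp [ha, ← hab] at hcol

end SimpleGraph

theorem List.length_filter_ne_one {α : Type*} {p : α → Bool} {l : List α} {a b : α}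
    (hab : a ≠ b) (ha : a ∈ l) (hb : b ∈ l) (hpa : p a) (hpb : p b) :
    (l.filter p).length ≠ 1 := by
  intro h
  obtain ⟨x, hx⟩ := List.length_eq_one_iff.1 h
  have ha' : a ∈ l.filter p := List.mem_filter.2 ⟨ha, hpa⟩
  have hb' : b ∈ l.filter p := List.mem_filter.2 ⟨hb, hpb⟩
  rw [hx, List.mem_singleton] at ha' hb'
  exact hab (ha'.trans hb'.symm)

namespace BridgedCliques

/-- Vertex `(i, j)` is the `j`-th vertex of the `i`-th copy of `K_{k+3}`; copy `2` is the one
glued along the edge `v₂v₃`. -/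
abbrev V (k : ℕ) := Fin 5 × Fin (k + 3)

variable {k : ℕ}

def v₀ : V k := (0, 0)
def v₁ : V k := (1, 0)
def v₂ : V k := (2, 0)
def v₃ : V k := (2, 1)
def v₄ : V k := (3, 0)
def v₅ : V k := (4, 0)

variable (k) in
def cutEdges : Set (Sym2 (V k)) := {s(v₀, v₁), s(v₁, v₂), s(v₃, v₄), s(v₄, v₅)}

variable (k) in
def S : SimpleGraph (V k) where
  Adj u v := u ≠ v ∧ (u.1 = v.1 ∨ s(u, v) ∈ cutEdges k)
  symm := ⟨fun _ _ h => ⟨h.1.symm, h.2.imp Eq.symm fun h => by rwa [Sym2.eq_swap]⟩⟩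
  loopless := ⟨fun _ h => h.1 rfl⟩

theorem S_adj_of_fst_eq {u v : V k} (huv : u ≠ v) (h : u.1 = v.1) : (S k).Adj u v :=
  ⟨huv, .inl h⟩

variable (k) in
def copiesUpTo (n : ℕ) : Set (V k) := {x | x.1.val ≤ n}

theorem mem_copiesUpTo {n : ℕ} {x : V k} : x ∈ copiesUpTo k n ↔ x.1.val ≤ n := .rfl

def crossingEdge : ℕ → Sym2 (V k)
  | 0 => s(v₀, v₁)
  | 1 => s(v₁, v₂)
  | 2 => s(v₃, v₄)
  | _ => s(v₄, v₅)

theorem eq_crossingEdge_of_adj {n : ℕ} ⦃x y : V k⦄ (h : (S k).Adj x y)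
    (hx : x ∈ copiesUpTo k n) (hy : y ∉ copiesUpTo k n) : s(x, y) = crossingEdge n := by
  simp only [mem_copiesUpTo, not_le] at hx hy
  rcases h.2 with hxy | hxy
  · rw [hxy] at hx; omega
  simp only [cutEdges, Set.mem_insert_iff, Set.mem_singleton_iff, Sym2.eq_iff] at hxy
  rcases hxy with (⟨rfl, rfl⟩ | ⟨rfl, rfl⟩) | (⟨rfl, rfl⟩ | ⟨rfl, rfl⟩) |
    (⟨rfl, rfl⟩ | ⟨rfl, rfl⟩) | (⟨rfl, rfl⟩ | ⟨rfl, rfl⟩) <;>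
  simp only [v₀, v₁, v₂, v₃, v₄, v₅] at hx hy <;> norm_num at hx hy
  all_goals first
    | omega
    | obtain rfl | rfl | rfl | rfl : n = 0 ∨ n = 1 ∨ n = 2 ∨ n = 3 := by omega
      all_goals first | rfl | omega

theorem crossingEdge_mem_edges {n : ℕ} {u v : V k} (p : (S k).Walk u v) (hu : u.1.val ≤ n)
    (hv : n < v.1.val) : crossingEdge n ∈ p.edges :=
  p.mem_edges_of_boundary eq_crossingEdge_of_adj hu (not_le.2 hv)

theorem S_connected : (S k).Connected := by
  have h01 : (S k).Adj v₀ v₁ := ⟨by simp [v₀, v₁], .inr (by simp [cutEdges])⟩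
  have h12 : (S k).Adj v₁ v₂ := ⟨by simp [v₁, v₂], .inr (by simp [cutEdges])⟩
  have h23 : (S k).Adj v₂ v₃ := S_adj_of_fst_eq (by simp [v₂, v₃]) rfl
  have h34 : (S k).Adj v₃ v₄ := ⟨by simp [v₃, v₄], .inr (by simp [cutEdges])⟩
  have h45 : (S k).Adj v₄ v₅ := ⟨by simp [v₄, v₅], .inr (by simp [cutEdges])⟩
  have hspine : ∀ i : Fin 5, (S k).Reachable v₀ (i, 0) := by
    intro i
    fin_cases i
    · rfl
    · exact h01.reachable
    · exact h01.reachable.trans h12.reachable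
    · exact ((h01.reachable.trans h12.reachable).trans h23.reachable).trans h34.reachable
    · exact (((h01.reachable.trans h12.reachable).trans h23.reachable).trans
        h34.reachable).trans h45.reachable
  refine (connected_iff_exists_forall_reachable _).2 ⟨v₀, fun u => (hspine u.1).trans ?_⟩
  by_cases hu : (u.1, 0) = u
  · rw [hu]
  · exact (S_adj_of_fst_eq hu rfl).reachable

theorem not_isBridge_of_fst_eq {u v : V k} (huv : u ≠ v) (h : u.1 = v.1) :
    ¬ (S k).IsBridge s(u, v) := by
  obtain ⟨j, hju, hjv⟩ := Fin.exists_ne_and_ne_of_two_lt u.2 v.2 (by omega)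
  have huw : u ≠ (u.1, j) := fun h => hju (congrArg Prod.snd h).symm
  have hvw : v ≠ (u.1, j) := fun h => hjv (congrArg Prod.snd h).symm
  rw [isBridge_iff, not_not, reachable_deleteEdges_iff_exists_walk]
  refine ⟨.cons (S_adj_of_fst_eq huw rfl) (.cons (S_adj_of_fst_eq hvw.symm h) .nil), ?_⟩
  simp [huv, huw, hvw, huv.symm]

theorem isBridge_iff_mem_cutEdges {e : Sym2 (V k)} : (S k).IsBridge e ↔ e ∈ cutEdges k := by
  induction e with | h u v => ?_
  constructor
  · intro h
    obtain ⟨huv, hblock | hcut⟩ := h.reachable_iff_adj.1 (S_connected.preconnected u v)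
    · exact absurd h (not_isBridge_of_fst_eq huv hblock)
    · exact hcut
  · intro h
    simp only [cutEdges, Set.mem_insert_iff, Set.mem_singleton_iff] at h
    rcases h with h | h | h | h <;> rw [h, isBridge_iff_forall_walk_mem_edges]
    · exact fun p => crossingEdge_mem_edges (n := 0) p (by simp [v₀]) (by simp [v₁])
    · exact fun p => crossingEdge_mem_edges (n := 1) p (by simp [v₁]) (by simp [v₂])
    · exact fun p => crossingEdge_mem_edges (n := 2) p (by simp [v₃]) (by simp [v₄])
    · exact fun p => crossingEdge_mem_edges (n := 3) p (by simp [v₄]) (by simp [v₅])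

theorem bridgeGraph_S_adj {u v : V k} :
    (bridgeGraph (S k)).Adj u v ↔ s(u, v) ∈ cutEdges k ∧ u ≠ v := by
  rw [bridgeGraph, fromEdgeSet_adj, Set.mem_ofPred_eq, isBridge_iff_mem_cutEdges]

theorem ncard_setOf_adj_fst_ne_le_two (v : V k) :
    {w | (S k).Adj v w ∧ v.1 ≠ w.1}.ncard ≤ 2 := by
  have hup : {w | (S k).Adj v w ∧ v.1.val < w.1.val}.ncard ≤ 1 := by
    refine (Set.ncard_le_one).2 fun a ⟨ha, hva⟩ b ⟨hb, hvb⟩ => (Sym2.congr_right (a := v)).1 ?_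
    rw [eq_crossingEdge_of_adj ha (mem_copiesUpTo.2 le_rfl) (mt mem_copiesUpTo.1 hva.not_ge),
      eq_crossingEdge_of_adj hb (mem_copiesUpTo.2 le_rfl) (mt mem_copiesUpTo.1 hvb.not_ge)]
  have hdown : {w | (S k).Adj v w ∧ w.1.val < v.1.val}.ncard ≤ 1 := by
    refine (Set.ncard_le_one).2 fun a ⟨ha, hav⟩ b ⟨hb, hbv⟩ => (Sym2.congr_left (a := v)).1 ?_
    rw [eq_crossingEdge_of_adj (n := v.1.val - 1) ha.symm (mem_copiesUpTo.2 (by omega))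
        (mt mem_copiesUpTo.1 (by omega)),
      eq_crossingEdge_of_adj (n := v.1.val - 1) hb.symm (mem_copiesUpTo.2 (by omega))
        (mt mem_copiesUpTo.1 (by omega))]
  have hsub : {w | (S k).Adj v w ∧ v.1 ≠ w.1} ⊆
      {w | (S k).Adj v w ∧ v.1.val < w.1.val} ∪ {w | (S k).Adj v w ∧ w.1.val < v.1.val} :=
    fun w ⟨hadj, hne⟩ => (lt_or_gt_of_ne (Fin.val_ne_of_ne hne)).imp (⟨hadj, ·⟩) (⟨hadj, ·⟩)
  calc _ ≤ _ := Set.ncard_le_ncard hsub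
    _ ≤ _ := Set.ncard_union_le _ _
    _ ≤ 2 := by omega

theorem isLinearForest_bridgeGraph_S : IsLinearForest (bridgeGraph (S k)) := by
  refine ⟨isAcyclic_bridgeGraph S_connected.preconnected, fun v =>
    (Set.ncard_le_ncard fun w hw => ?_).trans (ncard_setOf_adj_fst_ne_le_two v)⟩
  have hadj := bridgeGraph_le S_connected.preconnected hw
  exact ⟨hadj, fun h => not_isBridge_of_fst_eq hadj.ne h ((fromEdgeSet_adj _).1 hw).1⟩

variable (k) in
def leftPath : Set (V k) := {v₀, v₁, v₂}

variable (k) in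
def rightPath : Set (V k) := {v₃, v₄, v₅}

theorem bridgeGraph_S_adj_cases {x y : V k} (h : (bridgeGraph (S k)).Adj x y) :
    (x ∈ leftPath k ∧ y ∈ leftPath k) ∨ (x ∈ rightPath k ∧ y ∈ rightPath k) := by
  rw [bridgeGraph_S_adj] at h
  simp only [cutEdges, Set.mem_insert_iff, Set.mem_singleton_iff, Sym2.eq_iff] at h
  rcases h.1 with (⟨rfl, rfl⟩ | ⟨rfl, rfl⟩) | (⟨rfl, rfl⟩ | ⟨rfl, rfl⟩) |
    (⟨rfl, rfl⟩ | ⟨rfl, rfl⟩) | (⟨rfl, rfl⟩ | ⟨rfl, rfl⟩) <;>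
  simp [leftPath, rightPath]

theorem disjoint_leftPath_rightPath : Disjoint (leftPath k) (rightPath k) := by
  simp [leftPath, rightPath, v₀, v₁, v₂, v₃, v₄, v₅]

theorem bridgeGraph_S_reachable_of_mem {u v : V k} (h : s(u, v) ∈ cutEdges k) (huv : u ≠ v) :
    (bridgeGraph (S k)).Reachable u v :=
  (bridgeGraph_S_adj.2 ⟨h, huv⟩).reachable

theorem supp_connectedComponentMk_v₁ :
    ((bridgeGraph (S k)).connectedComponentMk v₁).supp = leftPath k := by
  refine ConnectedComponent.supp_connectedComponentMk_eq (fun x y h hx => ?_)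
    (by simp [leftPath]) ?_
  · exact ((bridgeGraph_S_adj_cases h).resolve_right
      fun hr => disjoint_leftPath_rightPath.notMem_of_mem_left hx hr.1).2
  · simp only [leftPath, Set.mem_insert_iff, Set.mem_singleton_iff, forall_eq_or_imp, forall_eq]
    refine ⟨(bridgeGraph_S_reachable_of_mem (by simp [cutEdges]) (by simp [v₀, v₁])).symm, .rfl,
      bridgeGraph_S_reachable_of_mem (by simp [cutEdges]) (by simp [v₁, v₂])⟩

theorem supp_connectedComponentMk_v₄ :
    ((bridgeGraph (S k)).connectedComponentMk v₄).supp = rightPath k := by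
  refine ConnectedComponent.supp_connectedComponentMk_eq (fun x y h hx => ?_)
    (by simp [rightPath]) ?_
  · exact ((bridgeGraph_S_adj_cases h).resolve_left
      fun hl => disjoint_leftPath_rightPath.notMem_of_mem_left hl.1 hx).2
  · simp only [rightPath, Set.mem_insert_iff, Set.mem_singleton_iff, forall_eq_or_imp, forall_eq]
    refine ⟨(bridgeGraph_S_reachable_of_mem (by simp [cutEdges]) (by simp [v₃, v₄])).symm, .rfl,
      bridgeGraph_S_reachable_of_mem (by simp [cutEdges]) (by simp [v₄, v₅])⟩

theorem ncard_leftPath : (leftPath k).ncard = 3 :=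
  Set.ncard_eq_three.2 ⟨v₀, v₁, v₂, by simp [v₀, v₁], by simp [v₀, v₂], by simp [v₁, v₂], rfl⟩

theorem ncard_rightPath : (rightPath k).ncard = 3 :=
  Set.ncard_eq_three.2 ⟨v₃, v₄, v₅, by simp [v₃, v₄], by simp [v₃, v₅], by simp [v₄, v₅], rfl⟩

theorem connectedComponentMk_v₁_ne_v₄ :
    (bridgeGraph (S k)).connectedComponentMk v₁ ≠ (bridgeGraph (S k)).connectedComponentMk v₄ := by
  intro h
  have hv₁ : v₁ ∈ ((bridgeGraph (S k)).connectedComponentMk v₄).supp :=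
    (ConnectedComponent.mem_supp_iff _ _).2 h
  rw [supp_connectedComponentMk_v₄] at hv₁
  exact disjoint_leftPath_rightPath.notMem_of_mem_left (by simp [leftPath]) hv₁

theorem eq_v₁_or_eq_v₄_of_two_le_ncard (C : (bridgeGraph (S k)).ConnectedComponent)
    (hC : 2 ≤ C.supp.ncard) :
    C = (bridgeGraph (S k)).connectedComponentMk v₁ ∨
      C = (bridgeGraph (S k)).connectedComponentMk v₄ := by
  obtain ⟨y, z, hy, hz, hyz⟩ := (Set.one_lt_ncard_iff).1 hC
  rw [ConnectedComponent.mem_supp_iff] at hy hz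
  obtain ⟨p⟩ := ConnectedComponent.exact (hy.trans hz.symm)
  rw [← hy, ← ConnectedComponent.mem_supp_iff, ← ConnectedComponent.mem_supp_iff,
    supp_connectedComponentMk_v₁, supp_connectedComponentMk_v₄]
  exact (bridgeGraph_S_adj_cases (p.adj_snd (Walk.not_nil_of_ne hyz))).imp And.left And.left

def block (v : V k) : Set (V k) := Prod.mk v.1 '' {v.2}ᶜ

theorem ncard_block (v : V k) : (block v).ncard = k + 2 := by
  rw [block, Set.ncard_image_of_injective _ (Prod.mk_right_injective v.1), Set.ncard_compl,
    Set.ncard_singleton, Nat.card_eq_fintype_card, Fintype.card_fin]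
  rfl

theorem block_subset_neighborSet (v : V k) : block v ⊆ (S k).neighborSet v := by
  rintro _ ⟨j, hj, rfl⟩
  exact S_adj_of_fst_eq (fun h => hj (congrArg Prod.snd h).symm) rfl

theorem neighborSet_zero_one : (S k).neighborSet (0, 1) = block (0, 1) := by
  refine Set.Subset.antisymm (fun w ⟨hne, h⟩ => ?_) (block_subset_neighborSet _)
  rcases h with h | h
  · exact ⟨w.2, fun hw => hne (Prod.ext h hw.symm), Prod.ext h rfl⟩
  · simp [cutEdges, v₀, v₁, v₂, v₃, v₄, v₅] at h

theorem path_edges_v₀_v₂ {p : (S k).Walk v₀ v₂} (hp : p.IsPath) :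
    p.edges = [s(v₀, v₁), s(v₁, v₂)] := by
  obtain ⟨q, hq, hpq⟩ := hp.exists_edges_eq_cons_of_boundary (P := copiesUpTo k 0)
    eq_crossingEdge_of_adj (by simp [mem_copiesUpTo, v₁]) (by simp [mem_copiesUpTo, v₀])
    (by simp [mem_copiesUpTo, v₂])
  obtain ⟨r, hr, hqr⟩ := hq.exists_edges_eq_cons_of_boundary (P := copiesUpTo k 1)
    eq_crossingEdge_of_adj (by simp [mem_copiesUpTo, v₂]) (by simp [mem_copiesUpTo, v₁])
    (by simp [mem_copiesUpTo, v₂])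
  rw [hpq, hqr, Walk.edges_eq_nil.2 (Walk.isPath_iff_nil.1 hr)]

theorem path_edges_v₃_v₅ {p : (S k).Walk v₃ v₅} (hp : p.IsPath) :
    p.edges = [s(v₃, v₄), s(v₄, v₅)] := by
  obtain ⟨q, hq, hpq⟩ := hp.exists_edges_eq_cons_of_boundary (P := copiesUpTo k 2)
    eq_crossingEdge_of_adj (by simp [mem_copiesUpTo, v₄]) (by simp [mem_copiesUpTo, v₃])
    (by simp [mem_copiesUpTo, v₅])
  obtain ⟨r, hr, hqr⟩ := hq.exists_edges_eq_cons_of_boundary (P := copiesUpTo k 3)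
    eq_crossingEdge_of_adj (by simp [mem_copiesUpTo, v₅]) (by simp [mem_copiesUpTo, v₄])
    (by simp [mem_copiesUpTo, v₅])
  rw [hpq, hqr, Walk.edges_eq_nil.2 (Walk.isPath_iff_nil.1 hr)]

theorem not_isCFConnected_of_lt_two {c : Sym2 (V k) → ℕ} (hc : ∀ e ∈ (S k).edgeSet, c e < 2) :
    ¬ IsCFConnected (S k) c := by
  intro hcf
  have h01 : c s(v₀, v₁) ≠ c s(v₁, v₂) :=
    hcf.apply_ne_of_forall_edges_eq (by simp [v₀, v₂]) fun _ => path_edges_v₀_v₂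
  have h34 : c s(v₃, v₄) ≠ c s(v₄, v₅) :=
    hcf.apply_ne_of_forall_edges_eq (by simp [v₃, v₅]) fun _ => path_edges_v₃_v₅
  obtain ⟨p, -, col, hcol⟩ := hcf v₀ v₅ (by simp [v₀, v₅])
  have hmem : ∀ n ≤ 3, crossingEdge n ∈ p.edges := fun n hn =>
    crossingEdge_mem_edges p (by simp [v₀]) (by simp [v₅]; omega)
  have hlt : ∀ e ∈ p.edges, c e < 2 := fun e he => hc e (p.edges_subset_edgeSet he)
  have h₀ : c s(v₀, v₁) < 2 := hlt _ (hmem 0 (by norm_num))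
  have h₁ : c s(v₁, v₂) < 2 := hlt _ (hmem 1 (by norm_num))
  have h₂ : c s(v₃, v₄) < 2 := hlt _ (hmem 2 (by norm_num))
  have h₃ : c s(v₄, v₅) < 2 := hlt _ (hmem 3 (by norm_num))
  by_cases hcol2 : col < 2
  · -- `col` sits on one of `v₀v₁, v₁v₂` and on one of `v₃v₄, v₄v₅`, which lie on `p`
    obtain ⟨i, hi, hic⟩ : ∃ i ≤ 1, c (crossingEdge i) = col := by
      by_cases h : c s(v₀, v₁) = col
      exacts [⟨0, by norm_num, h⟩, ⟨1, le_rfl, show c s(v₁, v₂) = col by omega⟩]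
    obtain ⟨j, hj, hj3, hjc⟩ : ∃ j, 2 ≤ j ∧ j ≤ 3 ∧ c (crossingEdge j) = col := by
      by_cases h : c s(v₃, v₄) = col
      exacts [⟨2, le_rfl, by norm_num, h⟩,
        ⟨3, by norm_num, le_rfl, show c s(v₄, v₅) = col by omega⟩]
    have hij : crossingEdge i ≠ (crossingEdge j : Sym2 (V k)) := by
      interval_cases i <;> interval_cases j <;> simp [crossingEdge, v₀, v₁, v₂, v₃, v₄, v₅]
    exact List.length_filter_ne_one hij (hmem i (by omega)) (hmem j hj3) (by simpa using hic)
      (by simpa using hjc) hcol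
  · have hnil : p.edges.filter (fun e => c e = col) = [] := List.filter_eq_nil_iff.2
      fun e he => by simpa using ((hlt e he).trans_le (not_lt.1 hcol2)).ne
    simp [hnil] at hcol

theorem three_le_cfcNum_S : 3 ≤ cfcNum (S k) :=
  le_cfcNum S_connected fun _ c hc hcf => by
    by_contra! hm
    exact not_isCFConnected_of_lt_two (fun e he => (hc e he).trans_le (by omega)) hcf

end BridgedCliques

theorem stmt_11 (t : ℕ) (ht : 3 ≤ t) :
    ∃ (V : Type) (_ : Fintype V) (S : SimpleGraph V),
      Fintype.card V = 5 * t ∧ S.Connected ∧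
      (∀ v, t - 1 ≤ vdeg S v) ∧ (∃ v, vdeg S v = t - 1) ∧
      IsLinearForest (bridgeGraph S) ∧
      (∃ C₁ C₂ : (bridgeGraph S).ConnectedComponent, C₁ ≠ C₂ ∧
        C₁.supp.ncard = 3 ∧ C₂.supp.ncard = 3 ∧
        ∀ C : (bridgeGraph S).ConnectedComponent, 2 ≤ C.supp.ncard → C = C₁ ∨ C = C₂) ∧
      3 ≤ cfcNum S := by
  obtain ⟨k, rfl⟩ : ∃ k, t = k + 3 := ⟨t - 3, by omega⟩
  open BridgedCliques in
  refine ⟨V k, inferInstance, S k, by simp, S_connected,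
    fun v => (ncard_block v).symm.le.trans (Set.ncard_le_ncard (block_subset_neighborSet v)),
    ⟨(0, 1), by rw [vdeg, neighborSet_zero_one, ncard_block]; rfl⟩, isLinearForest_bridgeGraph_S,
    ⟨_, _, connectedComponentMk_v₁_ne_v₄, by rw [supp_connectedComponentMk_v₁, ncard_leftPath],
      by rw [supp_connectedComponentMk_v₄, ncard_rightPath], eq_v₁_or_eq_v₄_of_two_le_ncard⟩,
    three_le_cfcNum_S⟩
end

section
/- For every n divisible by 4 with n/4 ≥ 4, the graph H obtained from four disjoint complete graphs H₁, H₂, H₃, H₄ each of order n/4 by choosing a vertex vᵢ in each Hᵢ and adding the edges v₁v₂, v₁v₃, v₁v₄ satisfies δ(H) = (n−4)/4 and cfc(H) ≥ 3. -/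
open SimpleGraph

/-- Four complete graphs of order `m` with hub vertices `(i, 0)`; the hub of block `0`
is joined to the hubs of the other three blocks. -/
def Hgraph (m : ℕ) : SimpleGraph (Fin 4 × Fin m) :=
  SimpleGraph.fromRel (fun x y => x.1 = y.1 ∨ (x.2.val = 0 ∧ y.2.val = 0 ∧ x.1 = 0))

/-!
Removing the centre `(0, 0)` disconnects the four blocks, so the only path between the hubs
`(i, 0)` and `(j, 0)` of two outer blocks consists of the two spokes `(0, 0)(i, 0)` and
`(0, 0)(j, 0)`. In a conflict-free colouring these two spokes must therefore get different
colours; with at most two colours two of the three spokes agree, so `cfc(H) ≥ 3`. Bounding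
`cfcNum` from below also needs some conflict-free colouring to exist (the infimum of the empty
set is `0`); on a connected finite graph any injective colouring is one. The degree bound holds
because the blocks are cliques of order `m`, with equality at any non-hub vertex.
-/

section CFConnected

variable {V : Type*} {G : SimpleGraph V} {c : Sym2 V → ℕ}

lemma IsCFConnected.of_injective (hG : G.Preconnected) (hc : Function.Injective c) :
    IsCFConnected G c := by
  classical
  intro u v huv
  obtain ⟨w⟩ := hG u v
  obtain ⟨e, he⟩ : ∃ e, e ∈ w.bypass.edges :=
    List.exists_mem_of_ne_nil _ fun h => huv (Walk.edges_eq_nil.mp h).eq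
  refine ⟨w.bypass, w.bypass_isPath, c e, ?_⟩
  rw [← List.count_eq_one_of_mem w.bypass_isPath.isTrail.edges_nodup he,
    List.count_eq_length_filter]
  congr 1
  exact List.filter_congr fun e' _ => by simp [hc.eq_iff, beq_eq_decide]

lemma exists_isCFConnected [Finite V] (hG : G.Preconnected) :
    ∃ k, ∃ c : Sym2 V → ℕ, (∀ e ∈ G.edgeSet, c e < k) ∧ IsCFConnected G c := by
  obtain ⟨c, hc⟩ := exists_injective_nat (Sym2 V)
  obtain ⟨B, hB⟩ := (Set.finite_range c).bddAbove
  exact ⟨B + 1, c, fun e _ => Nat.lt_succ_of_le (hB ⟨e, rfl⟩), .of_injective hG hc⟩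

lemma le_cfcNum [Finite V] (hG : G.Preconnected) {n : ℕ}
    (h : ∀ k (c : Sym2 V → ℕ), (∀ e ∈ G.edgeSet, c e < k) → IsCFConnected G c →
      n ≤ k) :
    n ≤ cfcNum G :=
  le_csInf (exists_isCFConnected hG) fun k ⟨c, hck, hc⟩ => h k c hck hc

lemma IsCFConnected.ne_of_forall_isPath_edges_eq (hc : IsCFConnected G c) {u v : V}
    (huv : u ≠ v) {e₁ e₂ : Sym2 V}
    (h : ∀ p : G.Walk u v, p.IsPath → p.edges = [e₁, e₂]) :
    c e₁ ≠ c e₂ := by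
  intro heq
  obtain ⟨p, hp, col, hcol⟩ := hc u v huv
  rw [h p hp] at hcol
  by_cases h₁ : c e₁ = col <;> simp [h₁, ← heq] at hcol

end CFConnected

section Hgraph

variable {m n : ℕ}

lemma Hgraph_adj {x y : Fin 4 × Fin m} :
    (Hgraph m).Adj x y ↔
      x ≠ y ∧ (x.1 = y.1 ∨ x.2.val = 0 ∧ y.2.val = 0 ∧ (x.1 = 0 ∨ y.1 = 0)) := by
  simp only [Hgraph, fromRel_adj]
  grind

lemma Hgraph_adj_of_fst_eq {x y : Fin 4 × Fin m} (hne : x ≠ y) (h : x.1 = y.1) :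
    (Hgraph m).Adj x y :=
  Hgraph_adj.mpr ⟨hne, .inl h⟩

lemma Hgraph_adj_center {j : Fin 4} (hj : j ≠ 0) :
    (Hgraph (n + 1)).Adj (0, 0) (j, 0) :=
  Hgraph_adj.mpr ⟨by simp [hj.symm], .inr ⟨rfl, rfl, .inl rfl⟩⟩

lemma image_mk_compl_subset_Hgraph_neighborSet (v : Fin 4 × Fin m) :
    Prod.mk v.1 '' {v.2}ᶜ ⊆ (Hgraph m).neighborSet v := by
  rintro _ ⟨b, hb, rfl⟩
  exact Hgraph_adj_of_fst_eq (fun h => hb (congrArg Prod.snd h).symm) rfl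

lemma Hgraph_neighborSet_of_val_ne_zero {v : Fin 4 × Fin m} (hv : v.2.val ≠ 0) :
    (Hgraph m).neighborSet v = Prod.mk v.1 '' {v.2}ᶜ := by
  refine (Set.Subset.antisymm fun w hw => ?_) (image_mk_compl_subset_Hgraph_neighborSet v)
  obtain ⟨hne, h | h⟩ := Hgraph_adj.mp hw
  · exact ⟨w.2, fun h' => hne (Prod.ext h h'.symm), by rw [h]⟩
  · exact absurd h.1 hv

lemma ncard_image_mk_compl_singleton (v : Fin 4 × Fin m) :
    (Prod.mk v.1 '' {v.2}ᶜ).ncard = m - 1 := by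
  rw [Set.ncard_image_of_injective _ (Prod.mk_right_injective _), Set.ncard_compl]
  simp

lemma le_vdeg_Hgraph (v : Fin 4 × Fin m) : m - 1 ≤ vdeg (Hgraph m) v := by
  rw [vdeg, ← ncard_image_mk_compl_singleton v]
  exact Set.ncard_le_ncard (image_mk_compl_subset_Hgraph_neighborSet v)

lemma vdeg_Hgraph_of_val_ne_zero {v : Fin 4 × Fin m} (hv : v.2.val ≠ 0) :
    vdeg (Hgraph m) v = m - 1 := by
  rw [vdeg, Hgraph_neighborSet_of_val_ne_zero hv, ncard_image_mk_compl_singleton]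

lemma Hgraph_reachable_center (x : Fin 4 × Fin (n + 1)) :
    (Hgraph (n + 1)).Reachable (0, 0) x := by
  have hub : (Hgraph (n + 1)).Reachable (0, 0) (x.1, 0) := by
    by_cases h : x.1 = 0
    · rw [h]
    · exact (Hgraph_adj_center h).reachable
  by_cases h : x.2 = 0
  · rwa [show x = (x.1, 0) from Prod.ext rfl h]
  · have hadj : (Hgraph (n + 1)).Adj (x.1, 0) x :=
      Hgraph_adj_of_fst_eq (fun e => h (congrArg Prod.snd e).symm) rfl
    exact hub.trans hadj.reachable

lemma Hgraph_preconnected : (Hgraph (n + 1)).Preconnected := fun x y =>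
  (Hgraph_reachable_center x).symm.trans (Hgraph_reachable_center y)

lemma Hgraph_fst_eq_of_center_notMem_support {u v : Fin 4 × Fin (n + 1)}
    (p : (Hgraph (n + 1)).Walk u v)
    (hp : ((0 : Fin 4), (0 : Fin (n + 1))) ∉ p.support) : u.1 = v.1 := by
  induction p with
  | nil => rfl
  | cons h q ih =>
    simp only [Walk.support_cons, List.mem_cons, not_or] at hp
    rcases Hgraph_adj.mp h with ⟨-, h₁ | ⟨h₁, h₂, h₃ | h₃⟩⟩
    · exact h₁.trans (ih hp.2)
    · exact absurd (Prod.ext h₃ (Fin.ext h₁)).symm hp.1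
    · have hcenter : _ = ((0 : Fin 4), (0 : Fin (n + 1))) := Prod.ext h₃ (Fin.ext h₂)
      exact absurd (hcenter ▸ q.start_mem_support) hp.2

lemma Hgraph_edges_of_isPath_center_hub {j : Fin 4} (hj : j ≠ 0)
    (p : (Hgraph (n + 1)).Walk (0, 0) (j, 0)) (hp : p.IsPath) :
    p.edges = [s((0, 0), (j, 0))] := by
  cases p with
  | nil => exact absurd rfl hj
  | @cons _ w _ h q =>
    obtain ⟨hq, hcenter⟩ := (Walk.cons_isPath_iff h q).mp hp
    have hw₁ : w.1 = j := Hgraph_fst_eq_of_center_notMem_support q hcenter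
    obtain rfl : w = (j, 0) := by
      rcases Hgraph_adj.mp h with ⟨-, h₁ | ⟨-, h₂, -⟩⟩
      · exact absurd (h₁.trans hw₁).symm hj
      · exact Prod.ext hw₁ (Fin.ext h₂)
    obtain rfl := Walk.eq_nil_iff_nil.mpr (Walk.isPath_iff_nil.mp hq)
    rfl

lemma Hgraph_edges_of_isPath_hub_hub {i j : Fin 4} (hi : i ≠ 0) (hj : j ≠ 0) (hij : i ≠ j)
    (p : (Hgraph (n + 1)).Walk (i, 0) (j, 0)) (hp : p.IsPath) :
    p.edges = [s((0, 0), (i, 0)), s((0, 0), (j, 0))] := by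
  have hcenter : ((0 : Fin 4), (0 : Fin (n + 1))) ∈ p.support := by
    by_contra h
    exact hij (Hgraph_fst_eq_of_center_notMem_support p h)
  have hfirst : (p.takeUntil _ hcenter).edges = [s((0, 0), (i, 0))] := by
    simpa [Walk.edges_reverse] using
      Hgraph_edges_of_isPath_center_hub hi _ (hp.takeUntil hcenter).reverse
  rw [← congrArg Walk.edges (p.take_spec hcenter), Walk.edges_append, hfirst,
    Hgraph_edges_of_isPath_center_hub hj _ (hp.dropUntil hcenter)]
  rfl

lemma IsCFConnected.Hgraph_spoke_color_ne {c : Sym2 (Fin 4 × Fin (n + 1)) → ℕ}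
    (hc : IsCFConnected (Hgraph (n + 1)) c) {i j : Fin 4} (hi : i ≠ 0) (hj : j ≠ 0)
    (hij : i ≠ j) : c s((0, 0), (i, 0)) ≠ c s((0, 0), (j, 0)) :=
  hc.ne_of_forall_isPath_edges_eq (by simp [hij]) (Hgraph_edges_of_isPath_hub_hub hi hj hij)

end Hgraph

theorem stmt_16 (m : ℕ) (hm : 4 ≤ m) :
    (∀ v, m - 1 ≤ vdeg (Hgraph m) v) ∧ (∃ v, vdeg (Hgraph m) v = m - 1) ∧
    3 ≤ cfcNum (Hgraph m) := by
  obtain ⟨n, rfl⟩ : ∃ n, m = n + 1 := ⟨m - 1, by omega⟩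
  refine ⟨le_vdeg_Hgraph, ⟨(0, ⟨1, by omega⟩), vdeg_Hgraph_of_val_ne_zero one_ne_zero⟩,
    ?_⟩
  refine le_cfcNum Hgraph_preconnected fun k c hck hc => ?_
  have hspoke (j : Fin 4) (hj : j ≠ 0) : c s((0, 0), (j, 0)) < k :=
    hck _ (Hgraph_adj_center hj)
  have h₁₂ := hc.Hgraph_spoke_color_ne (i := 1) (j := 2) (by decide) (by decide) (by decide)
  have h₁₃ := hc.Hgraph_spoke_color_ne (i := 1) (j := 3) (by decide) (by decide) (by decide)
  have h₂₃ := hc.Hgraph_spoke_color_ne (i := 2) (j := 3) (by decide) (by decide) (by decide)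
  have := hspoke 1 (by decide)
  have := hspoke 2 (by decide)
  have := hspoke 3 (by decide)
  omega
end

section
/- Let n ≡ 2 (mod 3) with 11 ≤ n ≤ 32, and let G be obtained from three disjoint complete graphs G₁, G₂, G₃ each of order (n−2)/3 and a path v₁u₁u₂v₂v₃ of order 5 by identifying, for each i ∈ {1,2,3}, a vertex of Gᵢ with vᵢ. Then deg(x)+deg(y) ≥ (2n−9)/5 for every pair of non-adjacent vertices x, y of G, and cfc(G) ≥ 3. -/
open SimpleGraph

/-!
Every edge of the path `v₁ u₁ u₂ v₂ v₃` is a bridge, and each clique `Gᵢ` hangs off the path at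
the single vertex `vᵢ`, so the only path between two vertices of `v₁ u₁ u₂ v₂ v₃` is the segment of
it joining them. A conflict-free 2-colouring must give different colours to the two edges of each
segment of length two, so the four path edges alternate in colour; but then on the segment from
`v₁` to `v₃` both colours occur twice. The degree condition is counting: a non-adjacent pair
contains a clique vertex, of degree at least `(n - 5) / 3`, and the other vertex has degree at
least `2`.
-/

namespace SimpleGraph.Walk

variable {V : Type*} {G : SimpleGraph V} {x y : V}

lemma mem_support_of_exits_through {A : Set V} {v : V}
    (hA : ∀ a b, G.Adj a b → a ∈ A → b ∉ A → b = v) (p : G.Walk x y) (hx : x ∈ A) (hy : y ∉ A) :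
    v ∈ p.support ∧ v ∉ A := by
  obtain ⟨d, hd, hd₁, hd₂⟩ := p.exists_boundary_dart A hx hy
  obtain rfl := hA _ _ d.adj hd₁ hd₂
  exact ⟨p.dart_snd_mem_support_of_mem_darts hd, hd₂⟩

lemma mem_edges_of_exits_along {A : Set V} {e : Sym2 V}
    (hA : ∀ a b, G.Adj a b → a ∈ A → b ∉ A → s(a, b) = e) (p : G.Walk x y) (hx : x ∈ A)
    (hy : y ∉ A) : e ∈ p.edges := by
  obtain ⟨d, hd, hd₁, hd₂⟩ := p.exists_boundary_dart A hx hy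
  rw [← hA _ _ d.adj hd₁ hd₂]
  exact List.mem_map_of_mem hd

/-- Entering `A` and leaving it again would visit `v` twice. -/
lemma IsPath.notMem_of_exits_through {A : Set V} {v : V}
    (hA : ∀ a b, G.Adj a b → a ∈ A → b ∉ A → b = v) {p : G.Walk x y} (hp : p.IsPath)
    (hx : x ∉ A) (hy : y ∉ A) {z : V} (hz : z ∈ p.support) : z ∉ A := by
  intro hzA
  obtain ⟨q, r, -, -, rfl⟩ := hp.mem_support_iff_exists_append.mp hz
  obtain ⟨hvq, hvA⟩ := mem_support_of_exits_through hA q.reverse hzA hx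
  obtain ⟨hvr, -⟩ := mem_support_of_exits_through hA r hzA hy
  exact hp.ne_of_mem_support_of_append (by rintro rfl; exact hvA hzA)
    (by simpa using hvq) hvr rfl

lemma IsPath.edges_perm_of_support_subset {p : G.Walk x y} (hp : p.IsPath) {S : Finset V}
    (hS : ∀ z ∈ p.support, z ∈ S) {L : List (Sym2 V)} (hL : L.Nodup) (hLp : L ⊆ p.edges)
    (hcard : S.card ≤ L.length + 1) : p.edges.Perm L := by
  classical
  have hsupp : p.support.length ≤ S.card := by
    rw [← List.toFinset_card_of_nodup hp.support_nodup]
    exact Finset.card_le_card fun z hz => hS z (List.mem_toFinset.mp hz)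
  refine ((hL.subperm hLp).perm_of_length_le ?_).symm
  rw [length_support] at hsupp
  rw [length_edges]
  omega

end SimpleGraph.Walk

lemma isCFConnected_of_injective {V : Type*} {G : SimpleGraph V} (hG : G.Preconnected)
    {c : Sym2 V → ℕ} (hc : c.Injective) : IsCFConnected G c := by
  classical
  intro u v huv
  obtain ⟨p, hp⟩ := (hG u v).exists_isPath
  cases p with
  | nil => exact absurd rfl huv
  | @cons _ w _ h q =>
    refine ⟨_, hp, c s(u, w), ?_⟩
    have hcount := List.count_eq_one_of_mem hp.edges_nodup (a := s(u, w)) (by simp)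
    simpa [List.count_eq_length_filter, hc.eq_iff] using hcount

lemma lt_cfcNum {V : Type*} [Finite V] {G : SimpleGraph V} (hG : G.Preconnected) {k : ℕ}
    (h : ∀ c : Sym2 V → ℕ, (∀ e ∈ G.edgeSet, c e < k) → ¬IsCFConnected G c) :
    k < cfcNum G := by
  obtain ⟨N, ⟨f⟩⟩ := Finite.exists_equiv_fin (Sym2 V)
  rw [cfcNum, Nat.lt_iff_add_one_le]
  refine le_csInf ⟨N, fun e => f e, fun e _ => (f e).isLt,
    isCFConnected_of_injective hG (Fin.val_injective.comp f.injective)⟩ ?_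
  rintro j ⟨c, hc, hcf⟩
  by_contra! hj
  exact h c (fun e he => (hc e he).trans_le (Nat.lt_succ_iff.mp hj)) hcf

namespace PathOfCliques

/-- `inl (i, j)` is a vertex of the clique `Gᵢ₊₁`, glued to the path at `inl (i, 0) = vᵢ₊₁`;
`inr 0 = u₁` and `inr 1 = u₂`. -/
abbrev Vertex (m : ℕ) := (Fin 3 × Fin m) ⊕ Fin 2

variable {m : ℕ}

/-- The position along the path `v₁ u₁ u₂ v₂ v₃`; `Gᵢ` lies at the position of `vᵢ`. -/
def level : Vertex m → ℕ
  | .inl (i, _) => ![0, 3, 4] i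
  | .inr k => k + 1

def IsRoot : Vertex m → Prop
  | .inl (_, j) => j.val = 0
  | .inr _ => True

/-- The graph `G`: each level is a clique, and the roots of consecutive levels are joined. -/
def graph (m : ℕ) : SimpleGraph (Vertex m) :=
  fromRel fun x y => level x = level y ∨ IsRoot x ∧ IsRoot y ∧ level x + 1 = level y

def root [NeZero m] : ℕ → Vertex m
  | 0 => .inl (0, 0)
  | 1 => .inr 0
  | 2 => .inr 1
  | 3 => .inl (1, 0)
  | _ => .inl (2, 0)

def spineEdge [NeZero m] (k : ℕ) : Sym2 (Vertex m) := s(root k, root (k + 1))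

lemma level_le_four (x : Vertex m) : level x ≤ 4 := by
  rcases x with ⟨i, j⟩ | k
  · fin_cases i <;> simp [level]
  · fin_cases k <;> simp [level]

lemma adj_of_level_eq {x y : Vertex m} (hxy : x ≠ y) (h : level x = level y) :
    (graph m).Adj x y :=
  (fromRel_adj _ _ _).mpr ⟨hxy, Or.inl (Or.inl h)⟩

lemma level_eq_of_adj_of_not_isRoot {x y : Vertex m} (h : (graph m).Adj x y) (hx : ¬IsRoot x) :
    level x = level y := by
  obtain ⟨-, (h | h) | (h | h)⟩ := (fromRel_adj _ _ _).mp h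
  · exact h
  · exact absurd h.1 hx
  · exact h.symm
  · exact absurd h.2.1 hx

lemma sub_one_le_vdeg_inl (i : Fin 3) (j : Fin m) : m - 1 ≤ vdeg (graph m) (.inl (i, j)) := by
  have hinj : Function.Injective fun j' : Fin m => (.inl (i, j') : Vertex m) := by
    intro _ _ h; simpa using h
  have hsub : (fun j' => .inl (i, j')) '' {j}ᶜ ⊆ (graph m).neighborSet (.inl (i, j)) := by
    rintro _ ⟨j', hj', rfl⟩
    exact adj_of_level_eq (by simpa [eq_comm] using hj') rfl
  calc m - 1 = ({j}ᶜ : Set (Fin m)).ncard := by rw [Set.ncard_compl]; simp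
    _ = ((fun j' => .inl (i, j')) '' {j}ᶜ : Set (Vertex m)).ncard :=
      (Set.ncard_image_of_injective _ hinj).symm
    _ ≤ vdeg (graph m) (.inl (i, j)) := Set.ncard_le_ncard hsub (Set.toFinite _)

variable [NeZero m]

lemma level_root {k : ℕ} (hk : k ≤ 4) : level (root k : Vertex m) = k := by
  interval_cases k <;> rfl

lemma isRoot_root (k : ℕ) : IsRoot (root k : Vertex m) := by
  rcases k with _ | _ | _ | _ | _ <;> simp [root, IsRoot]

lemma eq_root_level {x : Vertex m} (hx : IsRoot x) : x = root (level x) := by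
  rcases x with ⟨i, j⟩ | k
  · obtain rfl : j = 0 := Fin.ext hx
    fin_cases i <;> rfl
  · fin_cases k <;> rfl

lemma root_adj_root_succ {k : ℕ} (hk : k < 4) : (graph m).Adj (root k) (root (k + 1)) := by
  refine (fromRel_adj _ _ _).mpr ⟨fun h => ?_, Or.inl (Or.inr ⟨isRoot_root k, isRoot_root _, ?_⟩)⟩
  · have := congrArg level h
    rw [level_root hk.le, level_root hk] at this
    omega
  · rw [level_root hk.le, level_root hk]

lemma eq_root_of_adj_of_level_lt {x y : Vertex m} (h : (graph m).Adj x y)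
    (hxy : level x < level y) :
    level y = level x + 1 ∧ x = root (level x) ∧ y = root (level x + 1) := by
  obtain ⟨-, (h | ⟨hx, hy, h⟩) | (h | ⟨-, -, h⟩)⟩ := (fromRel_adj _ _ _).mp h
  · omega
  · exact ⟨h.symm, eq_root_level hx, h ▸ eq_root_level hy⟩
  · omega
  · omega

lemma eq_of_spineEdge_eq {k k' : ℕ} (hk : k < 4) (hk' : k' < 4)
    (h : (spineEdge k : Sym2 (Vertex m)) = spineEdge k') : k = k' := by
  have hlevel := congrArg (Sym2.map level) h
  simp only [spineEdge, Sym2.map_mk, level_root hk.le, level_root hk, level_root hk'.le,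
    level_root hk', Sym2.eq_iff] at hlevel
  omega

/-- A path between two roots runs straight along the spine: it cannot enter a clique through its
root, and it cannot go beyond its end levels. -/
lemma edges_perm_spineEdge_of_isPath {a b : ℕ} (hab : a ≤ b) (hb : b ≤ 4)
    {p : (graph m).Walk (root a) (root b)} (hp : p.IsPath) :
    p.edges.Perm ((List.range' a (b - a)).map spineEdge) := by
  have ha : a ≤ 4 := hab.trans hb
  refine hp.edges_perm_of_support_subset (S := (Finset.Icc a b).image root) (fun z hz => ?_)
    ((List.nodup_range' ..).map_on fun k hk k' hk' h => ?_) (fun e he => ?_) ?_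
  · have hroot : IsRoot z := by
      by_contra hz'
      refine hp.notMem_of_exits_through (A := {w | ¬IsRoot w ∧ level w = level z})
        (v := root (level z)) (fun x y hxy hx hy => ?_) (by simp [isRoot_root])
        (by simp [isRoot_root]) hz ⟨hz', rfl⟩
      have := level_eq_of_adj_of_not_isRoot hxy hx.1
      have hy' : IsRoot y := by by_contra hy'; exact hy ⟨hy', this ▸ hx.2⟩
      rw [eq_root_level hy', ← this, hx.2]
    have hlo : a ≤ level z := by
      by_contra hz'
      refine hp.notMem_of_exits_through (A := {w | level w < a}) (v := root a)
        (fun x y hxy hx hy => ?_) (by simp [level_root ha]) (by simp [level_root hb]; omega) hz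
        (by simpa using hz')
      simp only [Set.mem_ofPred_eq, not_lt] at hx hy
      obtain ⟨h₁, -, rfl⟩ := eq_root_of_adj_of_level_lt hxy (by omega)
      congr 1; omega
    have hhi : level z ≤ b := by
      by_contra hz'
      refine hp.notMem_of_exits_through (A := {w | b < level w}) (v := root b)
        (fun x y hxy hx hy => ?_) (by simp [level_root ha]; omega) (by simp [level_root hb]) hz
        (by simpa using hz')
      simp only [Set.mem_ofPred_eq, not_lt] at hx hy
      obtain ⟨h₁, hy', -⟩ := eq_root_of_adj_of_level_lt hxy.symm (by omega)
      rw [hy']; congr 1; omega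
    exact Finset.mem_image.mpr
      ⟨level z, Finset.mem_Icc.mpr ⟨hlo, hhi⟩, (eq_root_level hroot).symm⟩
  · simp only [List.mem_range'_1] at hk hk'
    exact eq_of_spineEdge_eq (by omega) (by omega) h
  · obtain ⟨k, hk, rfl⟩ := List.mem_map.mp he
    simp only [List.mem_range'_1] at hk
    refine p.mem_edges_of_exits_along (A := {w | level w ≤ k}) (fun x y hxy hx hy => ?_)
      (by simp [level_root ha]; omega) (by simp [level_root hb]; omega)
    simp only [Set.mem_ofPred_eq, not_le] at hx hy
    obtain ⟨h₁, hx', hy'⟩ := eq_root_of_adj_of_level_lt hxy (by omega)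
    have hxk : level x = k := by omega
    rw [hxk] at hx' hy'
    rw [hx', hy', spineEdge]
  · simp only [List.length_map, List.length_range']
    exact Finset.card_image_le.trans (by simp; omega)

lemma exists_count_eq_one_of_isCFConnected {c : Sym2 (Vertex m) → ℕ}
    (hc : IsCFConnected (graph m) c) {a b : ℕ} (hab : a < b) (hb : b ≤ 4) :
    ∃ col, ((List.range' a (b - a)).map (c ∘ spineEdge)).count col = 1 := by
  have hne : (root a : Vertex m) ≠ root b := fun h => by
    have := congrArg level h
    rw [level_root (hab.le.trans hb), level_root hb] at this
    omega
  obtain ⟨p, hp, col, hcol⟩ := hc _ _ hne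
  refine ⟨col, ?_⟩
  have hperm := (edges_perm_spineEdge_of_isPath hab.le hb hp).filter fun e => c e = col
  rw [hperm.length_eq] at hcol
  simpa [List.count_eq_length_filter, List.filter_map, Function.comp_def, beq_eq_decide]
    using hcol

lemma ne_of_count_pair_eq_one {x y col : ℕ} (h : [x, y].count col = 1) : x ≠ y := by
  rintro rfl
  simp only [List.count_cons, List.count_nil] at h
  split_ifs at h <;> omega

lemma count_ne_one_of_alternating {a b c d : ℕ} (ha : a < 2) (hb : b < 2) (hc : c < 2)
    (hd : d < 2) (hab : a ≠ b) (hbc : b ≠ c) (hcd : c ≠ d) (col : ℕ) :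
    [a, b, c, d].count col ≠ 1 := by
  rw [show c = a by omega, show d = b by omega,
    show [a, b, a, b] = [a, b] ++ [a, b] from rfl, List.count_append]
  omega

/-- The segments of length two force the four spine edges to alternate in colour. -/
lemma not_isCFConnected (c : Sym2 (Vertex m) → ℕ) (hc : ∀ e ∈ (graph m).edgeSet, c e < 2) :
    ¬IsCFConnected (graph m) c := by
  intro hcf
  have hcol : ∀ k < 4, c (spineEdge k) < 2 := fun k hk => hc _ (root_adj_root_succ hk)
  have hseg := fun a b hab hb => exists_count_eq_one_of_isCFConnected hcf (a := a) (b := b) hab hb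
  obtain ⟨_, h₀₂⟩ := hseg 0 2 (by omega) (by omega)
  obtain ⟨_, h₁₃⟩ := hseg 1 3 (by omega) (by omega)
  obtain ⟨_, h₂₄⟩ := hseg 2 4 (by omega) (by omega)
  obtain ⟨col, h₀₄⟩ := hseg 0 4 (by omega) (by omega)
  simp only [List.range', List.map, Function.comp, Nat.reduceAdd] at h₀₂ h₁₃ h₂₄ h₀₄
  exact count_ne_one_of_alternating (hcol 0 (by omega)) (hcol 1 (by omega)) (hcol 2 (by omega))
    (hcol 3 (by omega)) (ne_of_count_pair_eq_one h₀₂) (ne_of_count_pair_eq_one h₁₃)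
    (ne_of_count_pair_eq_one h₂₄) col h₀₄

lemma reachable_root_zero (x : Vertex m) : (graph m).Reachable (root 0) x := by
  have hroot : ∀ k ≤ 4, (graph m).Reachable (root 0) (root k) := by
    intro k hk
    induction k with
    | zero => rfl
    | succ k ih => exact (ih (by omega)).trans (root_adj_root_succ (by omega)).reachable
  refine (hroot _ (level_le_four x)).trans ?_
  by_cases hx : root (level x) = x
  · rw [hx]
  · exact (adj_of_level_eq hx (level_root (level_le_four x))).reachable

lemma connected_graph : (graph m).Connected :=
  connected_iff_exists_forall_reachable _ |>.mpr ⟨root 0, reachable_root_zero⟩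

lemma two_le_vdeg_inr (k : Fin 2) : 2 ≤ vdeg (graph m) (.inr k) := by
  have hk : (.inr k : Vertex m) = root (k + 1) := by fin_cases k <;> rfl
  have hsub : {root k, root (k + 2)} ⊆ (graph m).neighborSet (.inr k) := by
    rw [hk]
    rintro _ (rfl | rfl)
    · exact (root_adj_root_succ (by omega)).symm
    · exact root_adj_root_succ (by omega)
  have hne : (root k : Vertex m) ≠ root (k + 2) := fun h => by
    have := congrArg level h
    rw [level_root (by omega), level_root (by omega)] at this
    omega
  calc 2 = ({root k, root (k + 2)} : Set (Vertex m)).ncard := (Set.ncard_pair hne).symm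
    _ ≤ vdeg (graph m) (.inr k) := Set.ncard_le_ncard hsub (Set.toFinite _)

lemma add_one_le_vdeg_add_vdeg (hm : 3 ≤ m) {x y : Vertex m} (hxy : x ≠ y)
    (h : ¬(graph m).Adj x y) : m + 1 ≤ vdeg (graph m) x + vdeg (graph m) y := by
  rcases x with ⟨i, j⟩ | k <;> rcases y with ⟨i', j'⟩ | k'
  · have := sub_one_le_vdeg_inl i j
    have := sub_one_le_vdeg_inl i' j'
    omega
  · have := sub_one_le_vdeg_inl i j
    have := two_le_vdeg_inr (m := m) k'
    omega
  · have := two_le_vdeg_inr (m := m) k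
    have := sub_one_le_vdeg_inl i' j'
    omega
  · refine absurd ((fromRel_adj _ _ _).mpr ⟨hxy, ?_⟩) h
    fin_cases k <;> fin_cases k' <;> simp_all [level, IsRoot]

end PathOfCliques

open PathOfCliques in
theorem stmt_19 (n : ℕ) (hmod : n % 3 = 2) (h1 : 11 ≤ n) (h2 : n ≤ 32) :
    ∃ (V : Type) (_ : Fintype V) (G : SimpleGraph V),
      Fintype.card V = n ∧ G.Connected ∧
      (∀ x y : V, x ≠ y → ¬G.Adj x y →
        (2 * (n : ℚ) - 9) / 5 ≤ (vdeg G x : ℚ) + (vdeg G y : ℚ)) ∧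
      3 ≤ cfcNum G := by
  obtain ⟨m, rfl⟩ : ∃ m, n = 3 * m + 2 := ⟨n / 3, by omega⟩
  have hm : 3 ≤ m := by omega
  have : NeZero m := ⟨by omega⟩
  refine ⟨Vertex m, inferInstance, graph m, by simp, connected_graph, fun x y hxy hadj => ?_,
    lt_cfcNum connected_graph.preconnected not_isCFConnected⟩
  have hdeg : (m : ℚ) + 1 ≤ vdeg (graph m) x + vdeg (graph m) y := by
    exact_mod_cast add_one_le_vdeg_add_vdeg hm hxy hadj
  have hm10 : (m : ℚ) ≤ 10 := by exact_mod_cast (by omega : m ≤ 10)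
  push_cast
  linarith
end
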